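/- arXiv:1703.09262 — 14 statements merged into one kernel-verified Lean document; each statement's English description precedes it below -/
import Mathlib

section
/- Let (α,β,γ) be a morphism from a Schreier extension E: A →^κ B →^σ M of monoids to a Schreier extension E': A' →^{κ'} B' →^{σ'} M'. If α and γ are injective homomorphisms, then β is injective. -/
/-- `u` is a representative over `x ∈ M` for the sequence `A →^κ B →^σ M`:
`σ u = x` and every `b ∈ σ⁻¹(x)` can be written uniquely as `b = κ a + u` with `a ∈ A`.
(All monoids are written additively and need not be commutative; the identity of `M`
is written `0`.) -/
def IsRep {A B M : Type*} [AddMonoid A] [AddMonoid B] [AddMonoid M]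
    (κ : A →+ B) (σ : B →+ M) (x : M) (u : B) : Prop :=
  σ u = x ∧ ∀ b : B, σ b = x → ∃! a : A, b = κ a + u

/-- `A →^κ B →^σ M` is a (right) Schreier extension of the monoid `A` by the monoid `M`:
`κ` is injective, `σ` is surjective, `κ(A) = σ⁻¹(0)`, and every `x ∈ M` admits a
representative. -/
structure IsSchreierExt {A B M : Type*} [AddMonoid A] [AddMonoid B] [AddMonoid M]
    (κ : A →+ B) (σ : B →+ M) : Prop where
  kappa_inj : Function.Injective κ
  sigma_surj : Function.Surjective σ
  range_eq : ∀ b : B, σ b = 0 ↔ b ∈ Set.range κ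
  rep_exists : ∀ x : M, ∃ u : B, IsRep κ σ x u

/-- `(α, β, γ)` is a morphism of Schreier extensions from `A →^κ B →^σ M` to
`A' →^{κ'} B' →^{σ'} M'`: the two squares commute and `β` carries representatives
to representatives. -/
structure IsExtMorphism {A B M A' B' M' : Type*}
    [AddMonoid A] [AddMonoid B] [AddMonoid M] [AddMonoid A'] [AddMonoid B'] [AddMonoid M']
    (κ : A →+ B) (σ : B →+ M) (κ' : A' →+ B') (σ' : B' →+ M')
    (α : A →+ A') (β : B →+ B') (γ : M →+ M') : Prop where
  comm_left : ∀ a : A, β (κ a) = κ' (α a)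
  comm_right : ∀ b : B, σ' (β b) = γ (σ b)
  map_rep : ∀ (x : M) (u : B), IsRep κ σ x u → IsRep κ' σ' (γ x) (β u)

/-- If `(α, β, γ)` is a morphism of Schreier extensions of monoids and `α` and `γ` are
injective homomorphisms, then so is `β`. -/
theorem schreier_morphism_injective {A B M A' B' M' : Type*}
    [AddMonoid A] [AddMonoid B] [AddMonoid M] [AddMonoid A'] [AddMonoid B'] [AddMonoid M']
    (κ : A →+ B) (σ : B →+ M) (κ' : A' →+ B') (σ' : B' →+ M')
    (α : A →+ A') (β : B →+ B') (γ : M →+ M')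
    (hE : IsSchreierExt κ σ) (hE' : IsSchreierExt κ' σ')
    (hmor : IsExtMorphism κ σ κ' σ' α β γ)
    (hα : Function.Injective α) (hγ : Function.Injective γ) :
    Function.Injective β := by
  intro b₁ b₂ hb
  have hσ : σ b₁ = σ b₂ := by
    apply hγ
    rw [← hmor.comm_right, ← hmor.comm_right, hb]
  obtain ⟨u, hu⟩ := hE.rep_exists (σ b₁)
  obtain ⟨a₁, ha₁, -⟩ := hu.2 b₁ rfl
  obtain ⟨a₂, ha₂, -⟩ := hu.2 b₂ hσ.symm
  have hrep := hmor.map_rep _ _ hu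
  have hβ₁ : β b₁ = κ' (α a₁) + β u := by
    rw [ha₁, map_add, hmor.comm_left]
  have hβ₂ : β b₂ = κ' (α a₂) + β u := by
    rw [ha₂, map_add, hmor.comm_left]
  have hσβ : σ' (β b₁) = γ (σ b₁) := hmor.comm_right b₁
  obtain ⟨a', ha', huniq⟩ := hrep.2 (β b₁) hσβ
  have e1 := huniq (α a₁) hβ₁
  have e2 := huniq (α a₂) (hb ▸ hβ₂)
  have : a₁ = a₂ := hα (e1.trans e2.symm)
  rw [ha₁, ha₂, this]
end

section
/- Let (α,β,γ) be a morphism from a Schreier extension E: A →^κ B →^σ M of monoids to a Schreier extension E': A' →^{κ'} B' →^{σ'} M'. If α and γ are surjective homomorphisms, then β is surjective. -/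
/-- If `(α, β, γ)` is a morphism of Schreier extensions of monoids and `α` and `γ` are
surjective homomorphisms, then so is `β`. -/
theorem schreier_morphism_surjective {A B M A' B' M' : Type*}
    [AddMonoid A] [AddMonoid B] [AddMonoid M] [AddMonoid A'] [AddMonoid B'] [AddMonoid M']
    (κ : A →+ B) (σ : B →+ M) (κ' : A' →+ B') (σ' : B' →+ M')
    (α : A →+ A') (β : B →+ B') (γ : M →+ M')
    (hE : IsSchreierExt κ σ) (hE' : IsSchreierExt κ' σ')
    (hmor : IsExtMorphism κ σ κ' σ' α β γ)
    (hα : Function.Surjective α) (hγ : Function.Surjective γ) :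
    Function.Surjective β := by
  intro b'
  obtain ⟨x, hx⟩ := hγ (σ' b')
  obtain ⟨u, hu⟩ := hE.rep_exists x
  have hrep := hmor.map_rep x u hu
  obtain ⟨a', ha', -⟩ := hrep.2 b' (by rw [hx])
  obtain ⟨a, ha⟩ := hα a'
  exact ⟨κ a + u, by rw [map_add, hmor.comm_left, ha, ha']⟩
end

section
/- Let (α,β,γ) be a morphism from a Schreier extension E: A →^κ B →^σ M of monoids to a Schreier extension E': A' →^{κ'} B' →^{σ'} M'. If α and γ are isomorphisms, then β is an isomorphism. -/
/-- If `(α, β, γ)` is a morphism of Schreier extensions of monoids and `α` and `γ` are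
isomorphisms, then so is `β`. -/
theorem schreier_morphism_bijective {A B M A' B' M' : Type*}
    [AddMonoid A] [AddMonoid B] [AddMonoid M] [AddMonoid A'] [AddMonoid B'] [AddMonoid M']
    (κ : A →+ B) (σ : B →+ M) (κ' : A' →+ B') (σ' : B' →+ M')
    (α : A →+ A') (β : B →+ B') (γ : M →+ M')
    (hE : IsSchreierExt κ σ) (hE' : IsSchreierExt κ' σ')
    (hmor : IsExtMorphism κ σ κ' σ' α β γ)
    (hα : Function.Bijective α) (hγ : Function.Bijective γ) :
    Function.Bijective β := by
  constructor
  · -- injectivity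
    intro b₁ b₂ hb
    have hσ : σ b₁ = σ b₂ := by
      apply hγ.1
      rw [← hmor.comm_right, ← hmor.comm_right, hb]
    obtain ⟨u, hu⟩ := hE.rep_exists (σ b₁)
    obtain ⟨a₁, ha₁, -⟩ := hu.2 b₁ rfl
    obtain ⟨a₂, ha₂, -⟩ := hu.2 b₂ hσ.symm
    have hu' := hmor.map_rep _ _ hu
    obtain ⟨a', ha', huniq⟩ := hu'.2 (β b₁) (hmor.comm_right b₁)
    have e₁ : α a₁ = a' := by
      apply huniq; rw [← hmor.comm_left, ← map_add, ← ha₁]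
    have e₂ : α a₂ = a' := by
      apply huniq; rw [← hmor.comm_left, ← map_add, ← ha₂, ← hb]
    have : a₁ = a₂ := hα.1 (e₁.trans e₂.symm)
    rw [ha₁, ha₂, this]
  · -- surjectivity
    intro b'
    obtain ⟨x, hx⟩ := hγ.2 (σ' b')
    obtain ⟨u, hu⟩ := hE.rep_exists x
    have hu' := hmor.map_rep _ _ hu
    obtain ⟨a', ha', -⟩ := hu'.2 b' hx.symm
    obtain ⟨a, ha⟩ := hα.2 a'
    exact ⟨κ a + u, by rw [map_add, hmor.comm_left, ha, ← ha']⟩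
end

section
/- Let E: A →^κ B →^σ M be a Schreier extension of monoids, x ∈ M, and u_x ∈ σ⁻¹(x) a representative of E. Then an element b ∈ σ⁻¹(x) is itself a representative of E (i.e., every c ∈ σ⁻¹(x) can be written uniquely as c = κ(a) + b with a ∈ A) if and only if b = κ(a) + u_x for some invertible element a of A. In particular, if A is a group, then every element of B is a representative of E. -/
private lemma schreier_aux {A B M : Type*} [AddMonoid A] [AddMonoid B] [AddMonoid M]
    (κ : A →+ B) (σ : B →+ M) (hE : IsSchreierExt κ σ)
    (x : M) (u : B) (hu : IsRep κ σ x u) (v : AddUnits A) :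
    IsRep κ σ x (κ v + u) := by
  obtain ⟨hσu, hrep⟩ := hu
  have hκ0 : ∀ c : A, σ (κ c) = 0 := fun c => (hE.range_eq _).2 ⟨c, rfl⟩
  refine ⟨by simp [map_add, hκ0, hσu], fun c hc => ?_⟩
  obtain ⟨a₁, hceq, huniq⟩ := hrep c hc
  refine ⟨a₁ + ↑(-v), ?_, ?_⟩
  · show c = κ (a₁ + ↑(-v)) + (κ ↑v + u)
    calc c = κ a₁ + u := hceq
    _ = κ a₁ + (κ (↑(-v) + ↑v) + u) := by rw [AddUnits.neg_add, map_zero, zero_add]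
    _ = κ (a₁ + ↑(-v)) + (κ ↑v + u) := by rw [map_add, map_add, add_assoc, add_assoc]
  · intro d hd
    have hda : d + ↑v = a₁ := by
      apply huniq
      show c = κ (d + ↑v) + u
      rw [hd]; simp [map_add, add_assoc]
    calc d = d + (↑v + ↑(-v)) := by rw [AddUnits.add_neg, add_zero]
    _ = (d + ↑v) + ↑(-v) := by rw [add_assoc]
    _ = a₁ + ↑(-v) := by rw [hda]

/-- Let `E : A →^κ B →^σ M` be a Schreier extension of monoids, `x ∈ M`, and `u` a
representative of `E` over `x`. Then `b ∈ σ⁻¹(x)` is itself a representative of `E` over `x`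
if and only if `b = κ a + u` for some invertible element `a` of `A`. In particular, if `A`
is a group (every element of `A` is invertible), then every element of `B` is a
representative of `E`. -/
theorem schreier_isRep_iff {A B M : Type*}
    [AddMonoid A] [AddMonoid B] [AddMonoid M]
    (κ : A →+ B) (σ : B →+ M) (hE : IsSchreierExt κ σ)
    (x : M) (u : B) (hu : IsRep κ σ x u) :
    (∀ b : B, σ b = x → (IsRep κ σ x b ↔ ∃ a : A, IsAddUnit a ∧ b = κ a + u)) ∧
    ((∀ a : A, IsAddUnit a) → ∀ b : B, IsRep κ σ (σ b) b) := by
  constructor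
  · intro b hb
    constructor
    · rintro ⟨hσb, hbrep⟩
      obtain ⟨a, hba, _⟩ := hu.2 b hb
      obtain ⟨a', hua', _⟩ := hbrep u hu.1
      refine ⟨a, ?_, hba⟩
      have h1 : a + a' = 0 := by
        obtain ⟨a0, hb0, huniqb⟩ := hbrep b hb
        have e1 : b = κ (a + a') + b := by
          conv_lhs => rw [hba, hua']
          simp [map_add, add_assoc]
        have e2 : b = κ 0 + b := by simp
        rw [huniqb _ e1, huniqb _ e2]
      have h2 : a' + a = 0 := by
        obtain ⟨a0, hu0, huniqu⟩ := hu.2 u hu.1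
        have e1 : u = κ (a' + a) + u := by
          conv_lhs => rw [hua', hba]
          simp [map_add, add_assoc]
        have e2 : u = κ 0 + u := by simp
        rw [huniqu _ e1, huniqu _ e2]
      exact ⟨⟨a, a', h1, h2⟩, rfl⟩
    · rintro ⟨a, ha, rfl⟩
      obtain ⟨v, rfl⟩ := ha
      exact schreier_aux κ σ hE x u hu v
  · intro hall b
    obtain ⟨u', hu'⟩ := hE.rep_exists (σ b)
    obtain ⟨a, hba, -⟩ := hu'.2 b rfl
    obtain ⟨v, rfl⟩ := hall a
    have h := schreier_aux κ σ hE (σ b) u' hu' v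
    rwa [← hba] at h
end

section
/- Let M be a monoid, E: A →^κ B →^σ M a Schreier extension of an M-semimodule A by M, and α: A → A' a homomorphism of M-semimodules. Then there exists a Schreier extension αE: A' →^{κ'} B' →^{σ'} M of the M-semimodule A' by M together with a monoid homomorphism β: B → B' such that (α, β, 1_M) is a morphism of Schreier extensions from E to αE. -/
universe u v

section SchreierSemimodule

/- Throughout, `M` is a (multiplicatively written) monoid and an `M`-semimodule is an
additively written abelian monoid `A` together with a `DistribMulAction` of `M` on `A`,
i.e. an action satisfying `x • (a + a') = x • a + x • a'`, `x • 0 = 0`,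
`(x * y) • a = x • (y • a)` and `1 • a = a`. -/

variable (M : Type u) (A : Type v) [Monoid M] [AddCommMonoid A] [DistribMulAction M A]

/-- `u` is a representative over `x ∈ M` for the sequence `A →^κ B →^σ M`:
`σ u = x` and every `b ∈ σ⁻¹(x)` can be written uniquely as `b = κ a + u`. -/
def IsRepOf {B : Type*} [AddMonoid B] (κ : A →+ B) (σ : B → M) (x : M) (u : B) : Prop :=
  σ u = x ∧ ∀ b : B, σ b = x → ∃! a : A, b = κ a + u

/-- A Schreier extension of the `M`-semimodule `A` by the monoid `M`:  a sequence
`A →^κ B →^σ M` of monoids (`σ` being a homomorphism from the additively written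
monoid `B` to the multiplicatively written monoid `M`) such that `κ` is injective,
`σ` is surjective, `κ(A) = σ⁻¹(1)`, every `x ∈ M` admits a representative, and
moreover `b + κ a = κ (σ b • a) + b` for all `a ∈ A`, `b ∈ B`. -/
structure SchreierExtension where
  /-- the middle monoid of the extension -/
  B : Type (max u v)
  [instB : AddMonoid B]
  κ : A →+ B
  σ : B → M
  sigma_zero : σ 0 = 1
  sigma_add : ∀ b₁ b₂ : B, σ (b₁ + b₂) = σ b₁ * σ b₂
  kappa_inj : Function.Injective κ
  sigma_surj : Function.Surjective σ
  range_eq : ∀ b : B, σ b = 1 ↔ b ∈ Set.range κ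
  rep_exists : ∀ x : M, ∃ u : B, IsRepOf M A κ σ x u
  compat : ∀ (a : A) (b : B), b + κ a = κ (σ b • a) + b

attribute [instance] SchreierExtension.instB

variable {M A}

/-- `u` is a representative of the Schreier extension `E` over `x`. -/
def SchreierExtension.IsRep (E : SchreierExtension M A) (x : M) (u : E.B) : Prop :=
  IsRepOf M A E.κ E.σ x u

variable {A' : Type v} [AddCommMonoid A'] [DistribMulAction M A']

/-- `(α, β, 1_M)` is a morphism of Schreier extensions from `E` to `E'`:  the two squares
commute and `β` carries representatives to representatives. -/
def IsSchreierHom (E : SchreierExtension M A) (E' : SchreierExtension M A')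
    (α : A →+ A') (β : E.B →+ E'.B) : Prop :=
  (∀ a : A, β (E.κ a) = E'.κ (α a)) ∧ (∀ b : E.B, E'.σ (β b) = E.σ b) ∧
    ∀ (x : M) (u : E.B), E.IsRep x u → E'.IsRep x (β u)

/-- Two Schreier extensions of the `M`-semimodule `A` by `M` are congruent if there is a
monoid homomorphism between the middle monoids which commutes with the inclusions and the
projections and carries representatives to representatives, i.e. a morphism of the form
`(1_A, β, 1_M)`. -/
def SchreierCongruent (E E' : SchreierExtension M A) : Prop :=
  ∃ β : E.B →+ E'.B, IsSchreierHom E E' (AddMonoidHom.id A) β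

end SchreierSemimodule
section PushConstr
open Classical
variable {M : Type u} {A A' : Type v} [Monoid M] [AddCommMonoid A] [DistribMulAction M A]
  [AddCommMonoid A'] [DistribMulAction M A']
variable (E : SchreierExtension M A)

lemma sigma_kappa (a : A) : E.σ (E.κ a) = 1 := (E.range_eq _).mpr ⟨a, rfl⟩

noncomputable def erep (x : M) : E.B :=
  if x = 1 then 0 else (E.rep_exists x).choose

lemma erep_isRep (x : M) : E.IsRep x (erep E x) := by
  unfold erep
  split_ifs with h
  · subst h
    refine ⟨E.sigma_zero, fun b hb => ?_⟩
    obtain ⟨a, rfl⟩ := (E.range_eq b).mp hb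
    exact ⟨a, (add_zero _).symm,
      fun a' ha' => E.kappa_inj (by simp only [add_zero] at ha'; exact ha'.symm)⟩
  · exact (E.rep_exists x).choose_spec

lemma erep_one : erep E 1 = 0 := if_pos rfl

lemma sigma_erep (x : M) : E.σ (erep E x) = x := (erep_isRep E x).1

noncomputable def epart (b : E.B) : A := ((erep_isRep E (E.σ b)).2 b rfl).exists.choose

lemma epart_spec (b : E.B) : b = E.κ (epart E b) + erep E (E.σ b) :=
  ((erep_isRep E (E.σ b)).2 b rfl).exists.choose_spec

lemma erep_cancel {x : M} {a₁ a₂ : A}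
    (h : E.κ a₁ + erep E x = E.κ a₂ + erep E x) : a₁ = a₂ := by
  have hσ : E.σ (E.κ a₁ + erep E x) = x := by
    rw [E.sigma_add, sigma_kappa, sigma_erep, one_mul]
  obtain ⟨a, ha, hu⟩ := (erep_isRep E x).2 _ hσ
  rw [hu a₁ rfl, hu a₂ h]

lemma epart_eq {b : E.B} {a : A} {x : M} (hx : E.σ b = x)
    (h : b = E.κ a + erep E x) : epart E b = a := by
  subst hx
  exact erep_cancel E ((epart_spec E b).symm.trans h)

noncomputable def efac (x y : M) : A := epart E (erep E x + erep E y)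

lemma sigma_erep_add (x y : M) : E.σ (erep E x + erep E y) = x * y := by
  rw [E.sigma_add, sigma_erep, sigma_erep]

lemma efac_spec (x y : M) :
    erep E x + erep E y = E.κ (efac E x y) + erep E (x * y) := by
  have h := epart_spec E (erep E x + erep E y)
  rwa [sigma_erep_add] at h

lemma efac_one_right (x : M) : efac E x 1 = 0 := by
  refine epart_eq E (by rw [sigma_erep_add, mul_one]) ?_
  rw [erep_one, add_zero, map_zero, zero_add]

lemma efac_one_left (y : M) : efac E 1 y = 0 := by
  refine epart_eq E (by rw [sigma_erep_add, one_mul]) ?_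
  rw [erep_one, zero_add, map_zero, zero_add]

lemma efac_cocycle (x y z : M) :
    efac E x y + efac E (x * y) z = x • efac E y z + efac E x (y * z) := by
  have h1 : (erep E x + erep E y) + erep E z
      = E.κ (efac E x y + efac E (x * y) z) + erep E (x * y * z) := by
    rw [efac_spec, add_assoc, efac_spec, ← add_assoc, ← map_add]
  have h2 : (erep E x + erep E y) + erep E z
      = E.κ (x • efac E y z + efac E x (y * z)) + erep E (x * y * z) := by
    rw [add_assoc, efac_spec, ← add_assoc, E.compat, sigma_erep, add_assoc,
      efac_spec, ← add_assoc, ← map_add, ← mul_assoc]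
  exact erep_cancel E (h1.symm.trans h2)

lemma epart_add (b₁ b₂ : E.B) :
    epart E (b₁ + b₂)
      = epart E b₁ + E.σ b₁ • epart E b₂ + efac E (E.σ b₁) (E.σ b₂) := by
  refine epart_eq E (E.sigma_add b₁ b₂) ?_
  conv_lhs => rw [epart_spec E b₁, epart_spec E b₂]
  rw [add_assoc, ← add_assoc (erep E (E.σ b₁)), E.compat, sigma_erep, add_assoc,
    efac_spec, ← add_assoc, ← add_assoc, ← map_add, ← map_add]

lemma epart_kappa (a : A) : epart E (E.κ a) = a :=
  epart_eq E (sigma_kappa E a) (by rw [erep_one, add_zero])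

lemma epart_zero : epart E 0 = 0 :=
  epart_eq E E.sigma_zero (by rw [erep_one, add_zero, map_zero])

variable (α : A →+ A') (hα : ∀ (x : M) (a : A), α (x • a) = x • α a)

noncomputable def pushMonoid : AddMonoid (A' × M) :=
  letI : Zero (A' × M) := ⟨(0, 1)⟩
  letI : Add (A' × M) :=
    ⟨fun p q => (p.1 + p.2 • q.1 + α (efac E p.2 q.2), p.2 * q.2)⟩
  { add := (· + ·)
    zero := 0
    nsmul := nsmulRec
    nsmul_zero := fun _ => rfl
    nsmul_succ := fun _ _ => rfl
    add_assoc := by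
      rintro ⟨p1, p2⟩ ⟨q1, q2⟩ ⟨r1, r2⟩
      have key : α (efac E p2 q2) + α (efac E (p2 * q2) r2)
          = α (p2 • efac E q2 r2) + α (efac E p2 (q2 * r2)) := by
        rw [← map_add, ← map_add, efac_cocycle]
      refine Prod.ext ?_ (mul_assoc _ _ _)
      show p1 + p2 • q1 + α (efac E p2 q2) + (p2 * q2) • r1 + α (efac E (p2 * q2) r2)
        = p1 + p2 • (q1 + q2 • r1 + α (efac E q2 r2)) + α (efac E p2 (q2 * r2))
      rw [smul_add, smul_add, mul_smul, ← hα]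
      calc p1 + p2 • q1 + α (efac E p2 q2) + p2 • q2 • r1 + α (efac E (p2 * q2) r2)
          = (p1 + p2 • q1 + p2 • q2 • r1)
            + (α (efac E p2 q2) + α (efac E (p2 * q2) r2)) := by abel
        _ = (p1 + p2 • q1 + p2 • q2 • r1)
            + (α (p2 • efac E q2 r2) + α (efac E p2 (q2 * r2))) := by rw [key]
        _ = p1 + (p2 • q1 + p2 • q2 • r1 + α (p2 • efac E q2 r2))
            + α (efac E p2 (q2 * r2)) := by abel
    zero_add := by
      rintro ⟨p1, p2⟩
      refine Prod.ext ?_ (one_mul _)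
      show 0 + (1 : M) • p1 + α (efac E 1 p2) = p1
      rw [efac_one_left, map_zero, add_zero, one_smul, zero_add]
    add_zero := by
      rintro ⟨p1, p2⟩
      refine Prod.ext ?_ (mul_one _)
      show p1 + p2 • (0 : A') + α (efac E p2 1) = p1
      rw [efac_one_right, map_zero, add_zero, smul_zero, add_zero] }

noncomputable def pushExt : SchreierExtension M A' :=
  letI : AddMonoid (A' × M) := pushMonoid E α hα
  { B := A' × M
    κ :=
      { toFun := fun a' => (a', 1)
        map_zero' := rfl
        map_add' := by
          intro a b
          refine Prod.ext ?_ (one_mul _).symm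
          show a + b = a + (1 : M) • b + α (efac E 1 1)
          rw [efac_one_left, map_zero, add_zero, one_smul] }
    σ := Prod.snd
    sigma_zero := rfl
    sigma_add := fun _ _ => rfl
    kappa_inj := by
      intro a b h
      exact congrArg Prod.fst h
    sigma_surj := fun x => ⟨(0, x), rfl⟩
    range_eq := by
      rintro ⟨b1, b2⟩
      constructor
      · rintro rfl; exact ⟨b1, rfl⟩
      · rintro ⟨a, ha⟩; exact (congrArg Prod.snd ha).symm
    rep_exists := by
      intro x
      have hsimp : ∀ a' : A', ((a', (1 : M)) : A' × M) + ((0 : A'), x) = (a', x) := by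
        intro a'
        show ((a' + (1 : M) • (0 : A') + α (efac E 1 x), 1 * x) : A' × M) = (a', x)
        rw [efac_one_left, map_zero, add_zero, smul_zero, add_zero, one_mul]
      refine ⟨((0 : A'), x), rfl, ?_⟩
      rintro ⟨b1, b2⟩ hb
      have hb2 : b2 = x := hb
      subst hb2
      refine ⟨b1, (hsimp b1).symm, ?_⟩
      intro a' ha'
      have ha2 : ((b1, b2) : A' × M) = ((a', (1 : M)) : A' × M) + ((0 : A'), b2) := ha'
      rw [hsimp a'] at ha2
      exact (congrArg Prod.fst ha2).symm
    compat := by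
      rintro a ⟨b1, b2⟩
      refine Prod.ext ?_ ?_
      · show b1 + b2 • a + α (efac E b2 1) = b2 • a + (1 : M) • b1 + α (efac E 1 b2)
        rw [efac_one_right, efac_one_left, map_zero, add_zero, add_zero, one_smul,
          add_comm]
      · show b2 * 1 = 1 * b2
        rw [mul_one, one_mul] }

end PushConstr

/-- Let `M` be a monoid, `E` a Schreier extension of an `M`-semimodule `A` by `M`, and
`α : A → A'` a homomorphism of `M`-semimodules.  Then there exists a Schreier extension
`αE` of the `M`-semimodule `A'` by `M` together with a monoid homomorphism `β` such that
`(α, β, 1_M)` is a morphism of Schreier extensions from `E` to `αE`. -/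
theorem schreier_pushforward_exists {M : Type u} {A A' : Type v}
    [Monoid M] [AddCommMonoid A] [DistribMulAction M A]
    [AddCommMonoid A'] [DistribMulAction M A']
    (E : SchreierExtension M A) (α : A →+ A')
    (hα : ∀ (x : M) (a : A), α (x • a) = x • α a) :
    ∃ (E' : SchreierExtension M A') (β : E.B →+ E'.B), IsSchreierHom E E' α β := by
  classical
  letI : AddMonoid (A' × M) := pushMonoid E α hα
  refine ⟨pushExt E α hα, ?_⟩
  have h11 : (1 : M) * 1 = 1 := one_mul 1
  refine ⟨{ toFun := fun b => (α (epart E b), E.σ b)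
            map_zero' := by
              refine Prod.ext ?_ E.sigma_zero
              show α (epart E 0) = 0
              rw [epart_zero, map_zero]
            map_add' := by
              intro b₁ b₂
              refine Prod.ext ?_ (E.sigma_add b₁ b₂)
              show α (epart E (b₁ + b₂))
                = α (epart E b₁) + E.σ b₁ • α (epart E b₂)
                  + α (efac E (E.σ b₁) (E.σ b₂))
              rw [epart_add, map_add, map_add, hα] }, ?_, ?_, ?_⟩
  · intro a
    refine Prod.ext ?_ (sigma_kappa E a)
    show α (epart E (E.κ a)) = α a
    rw [epart_kappa]
  · intro b
    rfl
  · intro x u hu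
    have hσu : E.σ u = x := hu.1
    -- the "partial inverse" of `epart E u`
    have hdecomp : u = E.κ (epart E u) + erep E x := by
      have h := epart_spec E u
      rwa [hσu] at h
    obtain ⟨d, hd, -⟩ := hu.2 (erep E x) (sigma_erep E x)
    have hinv : d + epart E u = 0 := by
      refine erep_cancel E (x := x) ?_
      rw [map_add, map_zero, zero_add, add_assoc, ← hdecomp, ← hd]
    constructor
    · show E.σ u = x
      exact hσu
    · rintro ⟨b1, b2⟩ hb
      have hb2 : b2 = x := hb
      subst hb2
      have hadd : ∀ a' : A', ((a', (1 : M)) : A' × M) + (α (epart E u), E.σ u)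
          = (a' + α (epart E u), b2) := by
        intro a'
        refine Prod.ext ?_ ?_
        · show a' + (1 : M) • α (epart E u) + α (efac E 1 (E.σ u))
            = a' + α (epart E u)
          rw [hσu, efac_one_left, map_zero, add_zero, one_smul]
        · show 1 * E.σ u = b2
          rw [one_mul, hσu]
      refine ⟨b1 + α d, ?_, ?_⟩
      · show ((b1, b2) : A' × M) = ((b1 + α d, (1:M)) : A' × M) + (α (epart E u), E.σ u)
        rw [hadd]
        refine Prod.ext ?_ rfl
        show b1 = b1 + α d + α (epart E u)
        rw [add_assoc, ← map_add, hinv, map_zero, add_zero]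
      · intro a' ha'
        have ha2 : ((b1, b2) : A' × M)
            = ((a', (1 : M)) : A' × M) + (α (epart E u), E.σ u) := ha'
        rw [hadd] at ha2
        have h1 : b1 = a' + α (epart E u) := congrArg Prod.fst ha2
        rw [h1, add_assoc, ← map_add, add_comm (epart E u) d, hinv, map_zero, add_zero]
end

section
/- Let M be a monoid, E: A →^κ B →^σ M a Schreier extension of an M-semimodule A by M, and α: A → A' a homomorphism of M-semimodules. If E'' and E' are two Schreier extensions of the M-semimodule A' by M each admitting a morphism of the form (α, β, 1_M) from E, then E'' and E' are congruent. -/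
universe u v

/-- Let `M` be a monoid, `E` a Schreier extension of an `M`-semimodule `A` by `M`, and
`α : A → A'` a homomorphism of `M`-semimodules.  If `E''` and `E'` are two Schreier
extensions of the `M`-semimodule `A'` by `M`, each admitting a morphism of the form
`(α, β, 1_M)` from `E`, then `E''` and `E'` are congruent. -/
theorem schreier_pushforward_unique {M : Type u} {A A' : Type v}
    [Monoid M] [AddCommMonoid A] [DistribMulAction M A]
    [AddCommMonoid A'] [DistribMulAction M A']
    (E : SchreierExtension M A) (α : A →+ A')
    (hα : ∀ (x : M) (a : A), α (x • a) = x • α a)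
    (E'' E' : SchreierExtension M A')
    (β'' : E.B →+ E''.B) (β' : E.B →+ E'.B)
    (h'' : IsSchreierHom E E'' α β'') (h' : IsSchreierHom E E' α β') :
    SchreierCongruent E'' E' := by
  classical
  obtain ⟨hκ'', hσ'', hrep''⟩ := h''
  obtain ⟨hκ', hσ', hrep'⟩ := h'
  choose u hu using E.rep_exists
  -- decomposition in E'' with respect to the representatives `β'' (u x)`
  have key : ∀ b : E''.B, ∃! a : A', b = E''.κ a + β'' (u (E''.σ b)) := fun b =>
    (hrep'' (E''.σ b) (u _) (hu _)).2 b rfl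
  set d : E''.B → A' := fun b => (key b).choose with hd
  have hdspec : ∀ b, b = E''.κ (d b) + β'' (u (E''.σ b)) := fun b => (key b).choose_spec.1
  have hduniq : ∀ b a, b = E''.κ a + β'' (u (E''.σ b)) → a = d b := fun b a h =>
    (key b).choose_spec.2 a h
  set f : E''.B → E'.B := fun b => E'.κ (d b) + β' (u (E''.σ b)) with hf
  have hfval : ∀ (b : E''.B) (a : A'), b = E''.κ a + β'' (u (E''.σ b)) →
      f b = E'.κ a + β' (u (E''.σ b)) := by
    intro b a h
    have : a = d b := hduniq b a h
    simp only [hf, ← this]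
  -- the representative over 1 lies in the image of κ
  obtain ⟨c1, hc1⟩ : u 1 ∈ Set.range E.κ := (E.range_eq (u 1)).1 (hu 1).1
  -- map_zero
  obtain ⟨a0, ha0, -⟩ := (hu 1).2 0 E.sigma_zero
  have h0'' : (0 : E''.B) = E''.κ (α a0) + β'' (u 1) := by
    have := congrArg β'' ha0
    simpa [hκ''] using this
  have h0' : (0 : E'.B) = E'.κ (α a0) + β' (u 1) := by
    have := congrArg β' ha0
    simpa [hκ'] using this
  have hfzero : f 0 = 0 := by
    have hσ0 : E''.σ (0 : E''.B) = 1 := E''.sigma_zero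
    have := hfval 0 (α a0) (by rw [hσ0]; exact h0'')
    rw [this, hσ0, ← h0']
  -- map_add
  have hfadd : ∀ b₁ b₂ : E''.B, f (b₁ + b₂) = f b₁ + f b₂ := by
    intro b₁ b₂
    set x₁ := E''.σ b₁
    set x₂ := E''.σ b₂
    have hσu₁ : E.σ (u x₁) = x₁ := (hu x₁).1
    have hσu₂ : E.σ (u x₂) = x₂ := (hu x₂).1
    obtain ⟨c, hc, -⟩ := (hu (x₁ * x₂)).2 (u x₁ + u x₂)
      (by rw [E.sigma_add, hσu₁, hσu₂])
    have hσ12 : E''.σ (b₁ + b₂) = x₁ * x₂ := E''.sigma_add b₁ b₂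
    -- compatibility in E''
    have hcomp'' : β'' (u x₁) + E''.κ (d b₂) = E''.κ (x₁ • d b₂) + β'' (u x₁) := by
      have := E''.compat (d b₂) (β'' (u x₁))
      rwa [hσ'' (u x₁), hσu₁] at this
    have hdecomp : b₁ + b₂ = E''.κ (d b₁ + x₁ • d b₂ + α c) + β'' (u (x₁ * x₂)) := by
      calc b₁ + b₂ = (E''.κ (d b₁) + β'' (u x₁)) + (E''.κ (d b₂) + β'' (u x₂)) := by
            rw [← hdspec b₁, ← hdspec b₂]
        _ = E''.κ (d b₁) + (β'' (u x₁) + E''.κ (d b₂)) + β'' (u x₂) := by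
            rw [add_assoc, add_assoc, add_assoc]
        _ = E''.κ (d b₁) + (E''.κ (x₁ • d b₂) + β'' (u x₁)) + β'' (u x₂) := by
            rw [hcomp'']
        _ = E''.κ (d b₁) + E''.κ (x₁ • d b₂) + (β'' (u x₁) + β'' (u x₂)) := by
            simp only [add_assoc]
        _ = E''.κ (d b₁) + E''.κ (x₁ • d b₂) + (E''.κ (α c) + β'' (u (x₁ * x₂))) := by
            rw [← map_add β'' (u x₁) (u x₂), hc, map_add, hκ'']
        _ = E''.κ (d b₁ + x₁ • d b₂ + α c) + β'' (u (x₁ * x₂)) := by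
            simp only [map_add, add_assoc]
    have h1 : f (b₁ + b₂) = E'.κ (d b₁ + x₁ • d b₂ + α c) + β' (u (x₁ * x₂)) := by
      have := hfval (b₁ + b₂) (d b₁ + x₁ • d b₂ + α c) (by rw [hσ12]; exact hdecomp)
      rwa [hσ12] at this
    have hcomp' : β' (u x₁) + E'.κ (d b₂) = E'.κ (x₁ • d b₂) + β' (u x₁) := by
      have := E'.compat (d b₂) (β' (u x₁))
      rwa [hσ' (u x₁), hσu₁] at this
    have h2 : f b₁ + f b₂ = E'.κ (d b₁ + x₁ • d b₂ + α c) + β' (u (x₁ * x₂)) := by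
      calc f b₁ + f b₂ = (E'.κ (d b₁) + β' (u x₁)) + (E'.κ (d b₂) + β' (u x₂)) := rfl
        _ = E'.κ (d b₁) + (β' (u x₁) + E'.κ (d b₂)) + β' (u x₂) := by
            rw [add_assoc, add_assoc, add_assoc]
        _ = E'.κ (d b₁) + (E'.κ (x₁ • d b₂) + β' (u x₁)) + β' (u x₂) := by
            rw [hcomp']
        _ = E'.κ (d b₁) + E'.κ (x₁ • d b₂) + (β' (u x₁) + β' (u x₂)) := by
            simp only [add_assoc]
        _ = E'.κ (d b₁) + E'.κ (x₁ • d b₂) + (E'.κ (α c) + β' (u (x₁ * x₂))) := by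
            rw [← map_add β' (u x₁) (u x₂), hc, map_add, hκ']
        _ = E'.κ (d b₁ + x₁ • d b₂ + α c) + β' (u (x₁ * x₂)) := by
            simp only [map_add, add_assoc]
    rw [h1, h2]
  refine ⟨⟨⟨f, hfzero⟩, hfadd⟩, ?_, ?_, ?_⟩
  · -- f ∘ κ'' = κ'
    intro a'
    have hσκ : E''.σ (E''.κ a') = 1 := (E''.range_eq _).2 ⟨a', rfl⟩
    have hdec := hdspec (E''.κ a')
    rw [hσκ, ← hc1, hκ''] at hdec
    have : a' = d (E''.κ a') + α c1 := E''.kappa_inj (by rw [map_add]; exact hdec)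
    show f (E''.κ a') = E'.κ a'
    simp only [hf]
    rw [hσκ, ← hc1, hκ', ← map_add, ← this]
  · -- σ' ∘ f = σ''
    intro b
    show E'.σ (E'.κ (d b) + β' (u (E''.σ b))) = E''.σ b
    rw [E'.sigma_add, (E'.range_eq _).2 ⟨d b, rfl⟩, one_mul, hσ', (hu _).1]
  · -- f carries representatives to representatives
    intro x v hv
    have hσv : E''.σ v = x := hv.1
    have hdv : v = E''.κ (d v) + β'' (u x) := by
      have := hdspec v; rwa [hσv] at this
    have hfv : f v = E'.κ (d v) + β' (u x) := by
      simp only [hf]; rw [hσv]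
    -- translation by `d v` is bijective on A'
    have htrans : ∀ c : A', ∃! e : A', e + d v = c := by
      intro c
      have hσb : E''.σ (E''.κ c + β'' (u x)) = x := by
        rw [E''.sigma_add, (E''.range_eq _).2 ⟨c, rfl⟩, one_mul, hσ'', (hu x).1]
      obtain ⟨e, he, heuniq⟩ := hv.2 (E''.κ c + β'' (u x)) hσb
      have hrepx := hrep'' x (u x) (hu x)
      have hdecunique : ∀ a₁ a₂ : A',
          E''.κ a₁ + β'' (u x) = E''.κ a₂ + β'' (u x) → a₁ = a₂ := by
        intro a₁ a₂ h12
        obtain ⟨a, -, hau⟩ := hrepx.2 (E''.κ a₁ + β'' (u x))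
          (by rw [E''.sigma_add, (E''.range_eq _).2 ⟨a₁, rfl⟩, one_mul, hσ'', (hu x).1])
        rw [hau a₁ rfl, hau a₂ h12]
      have hed : E''.κ c + β'' (u x) = E''.κ (e + d v) + β'' (u x) := by
        rw [map_add, add_assoc, ← hdv]; exact he
      refine ⟨e, (hdecunique _ _ hed).symm, ?_⟩
      intro e' he'
      refine heuniq e' ?_
      show E''.κ c + β'' (u x) = E''.κ e' + v
      rw [hdv, ← add_assoc, ← map_add, he']
    constructor
    · show E'.σ (f v) = x
      rw [hfv, E'.sigma_add, (E'.range_eq _).2 ⟨d v, rfl⟩, one_mul, hσ', (hu x).1]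
    · intro b' hb'
      obtain ⟨cb, hcb, hcbuniq⟩ := (hrep' x (u x) (hu x)).2 b' hb'
      obtain ⟨e, he, heuniq⟩ := htrans cb
      refine ⟨e, ?_, ?_⟩
      · show b' = E'.κ e + f v
        rw [hfv, hcb, ← he, map_add, add_assoc]
      · intro e' he'
        refine heuniq e' ?_
        have he'2 : b' = E'.κ e' + f v := he'
        have hb2 : b' = E'.κ (e' + d v) + β' (u x) := by
          rw [he'2, hfv, ← add_assoc, ← map_add]
        exact hcbuniq (e' + d v) hb2
end

section
/- Let E: A →^κ B →^σ M be a Schreier extension of monoids in which A is a cancellative abelian monoid. Then there exists a unique monoid homomorphism φ: M → End(A) (End(A) being the monoid of monoid endomorphisms of A under composition) such that b + κ(a) = κ(φ(σ(b))(a)) + b for all a ∈ A and b ∈ B; in particular, every such extension induces an M-semimodule structure on A making it a Schreier extension of the M-semimodule A by M. -/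
/-- Let `E : A →^κ B →^σ M` be a Schreier extension of monoids in which `A` is a
cancellative abelian monoid. Then there is a unique monoid homomorphism
`φ : M → End(A)` (i.e. a map into monoid endomorphisms of `A` with `φ 0 = id` and
`φ (x + y) = φ x ∘ φ y`, the identity of `M` being written additively as `0`)
such that `b + κ a = κ (φ (σ b) a) + b` for all `a ∈ A` and `b ∈ B`; in particular `A`
becomes an `M`-semimodule in such a way that `E` is a Schreier extension of the
`M`-semimodule `A` by `M`. -/
theorem schreier_induced_action {A B M : Type*}
    [AddCancelCommMonoid A] [AddMonoid B] [AddMonoid M]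
    (κ : A →+ B) (σ : B →+ M) (hE : IsSchreierExt κ σ) :
    ∃! φ : M → A →+ A,
      φ 0 = AddMonoidHom.id A ∧
      (∀ x y : M, φ (x + y) = (φ x).comp (φ y)) ∧
      (∀ (a : A) (b : B), b + κ a = κ (φ (σ b) a) + b) := by
  have hσκ : ∀ a : A, σ (κ a) = 0 := fun a => (hE.range_eq (κ a)).mpr ⟨a, rfl⟩
  have hcancel : ∀ (b : B) (d d' : A), κ d + b = κ d' + b → d = d' := by
    intro b d d' h
    obtain ⟨u, hu, huniq⟩ := hE.rep_exists (σ b)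
    obtain ⟨c, hc, -⟩ := huniq b rfl
    have hσ : σ (κ d + b) = σ b := by simp [hσκ]
    obtain ⟨e, -, heu⟩ := huniq (κ d + b) hσ
    have h1 : d + c = e := heu _ (by show κ d + b = κ (d + c) + u; rw [map_add, add_assoc, ← hc])
    have h2 : d' + c = e := heu _ (by show κ d + b = κ (d' + c) + u; rw [map_add, add_assoc, ← hc]; exact h)
    exact add_right_cancel (h1.trans h2.symm)
  choose u hu using hE.rep_exists
  have key : ∀ (x : M) (a : A), ∃ a' : A, u x + κ a = κ a' + u x := by
    intro x a
    obtain ⟨hux, huniq⟩ := hu x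
    obtain ⟨a', ha', -⟩ := huniq (u x + κ a) (by simp [hσκ, hux])
    exact ⟨a', ha'⟩
  choose f hf using key
  have comm : ∀ (b : B) (a : A), b + κ a = κ (f (σ b) a) + b := by
    intro b a
    obtain ⟨hux, huniq⟩ := hu (σ b)
    obtain ⟨c, hc, -⟩ := huniq b rfl
    calc b + κ a = κ c + (u (σ b) + κ a) := by rw [← add_assoc, ← hc]
      _ = κ c + (κ (f (σ b) a) + u (σ b)) := by rw [hf]
      _ = κ (c + f (σ b) a) + u (σ b) := by rw [map_add, add_assoc]
      _ = κ (f (σ b) a + c) + u (σ b) := by rw [add_comm c]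
      _ = κ (f (σ b) a) + b := by rw [map_add, add_assoc, ← hc]
  have fadd : ∀ x a a', f x (a + a') = f x a + f x a' := by
    intro x a a'
    apply hcancel (u x)
    calc κ (f x (a + a')) + u x = u x + κ (a + a') := (hf x (a + a')).symm
      _ = (u x + κ a) + κ a' := by rw [map_add, add_assoc]
      _ = κ (f x a) + (u x + κ a') := by rw [hf, add_assoc]
      _ = κ (f x a) + (κ (f x a') + u x) := by rw [hf]
      _ = κ (f x a + f x a') + u x := by rw [map_add, add_assoc]
  have fzero : ∀ x, f x 0 = 0 := by
    intro x
    apply hcancel (u x)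
    calc κ (f x 0) + u x = u x + κ 0 := (hf x 0).symm
      _ = κ 0 + u x := by simp
  refine ⟨fun x => ⟨⟨f x, fzero x⟩, fadd x⟩, ⟨?_, ?_, ?_⟩, ?_⟩
  · ext a
    have := comm 0 a
    simp only [map_zero] at this
    have : κ a = κ (f 0 a) := by simpa using this
    exact (hE.kappa_inj this).symm
  · intro x y
    ext a
    show f (x + y) a = f x (f y a)
    have hσb : σ (u x + u y) = x + y := by rw [map_add, (hu x).1, (hu y).1]
    apply hcancel (u x + u y)
    have h1 := comm (u x + u y) a
    rw [hσb] at h1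
    calc κ (f (x + y) a) + (u x + u y) = (u x + u y) + κ a := h1.symm
      _ = u x + (u y + κ a) := by rw [add_assoc]
      _ = u x + (κ (f y a) + u y) := by rw [hf]
      _ = (u x + κ (f y a)) + u y := by rw [add_assoc]
      _ = (κ (f x (f y a)) + u x) + u y := by rw [hf]
      _ = κ (f x (f y a)) + (u x + u y) := by rw [add_assoc]
  · intro a b
    exact comm b a
  · intro φ' ⟨h0, hadd, hcomm⟩
    funext x
    ext a
    show φ' x a = f x a
    apply hcancel (u x)
    have h1 := hcomm a (u x)
    rw [(hu x).1] at h1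
    rw [← h1, hf]
end

section
/- Let M be a monoid, A an M-semimodule, and f: M × M → A a 2-cocycle. Then B_f = A × M with composition (a₁,x) + (a₂,y) = (a₁ + xa₂ + f(x,y), xy) is a monoid with identity (0,1); the sequence E_f: A →^{κ_f} B_f →^{σ_f} M with κ_f(a) = (a,1) and σ_f(a,x) = x is a Schreier extension of the M-semimodule A by M whose representatives are exactly the elements (a,x) with a ∈ U(A); and f is a factor set of E_f (for the representatives (0,x)). -/
universe u v

section Cocycles

variable (M : Type u) (A : Type v) [Monoid M] [AddCommMonoid A] [DistribMulAction M A]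

/-- A (normalized) `2`-cocycle of the monoid `M` with coefficients in the `M`-semimodule
`A`: `f (x, 1) = 0 = f (1, y)` and `x • f (y, z) + f (x, y*z) = f (x*y, z) + f (x, y)`. -/
def IsCocycle (f : M → M → A) : Prop :=
  (∀ x : M, f x 1 = 0) ∧ (∀ y : M, f 1 y = 0) ∧
    ∀ x y z : M, x • f y z + f x (y * z) = f (x * y) z + f x y

/-- The type of (normalized) `2`-cocycles of `M` with coefficients in `A`. -/
def Cocycle : Type (max u v) := {f : M → M → A // IsCocycle M A f}

/-- The zero `2`-cocycle. -/
def zeroCocycle : Cocycle M A :=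
  ⟨fun _ _ => (0 : A), fun _ => rfl, fun _ => rfl, by intro x y z; simp⟩

/-- Two `2`-cocycles `f, f'` are strongly cohomologous if there is a function
`g : M → U(A)` into the group of invertible elements of `A` with `g 1 = 0` and
`f (x, y) = f' (x, y) + x • g y − g (x*y) + g x` for all `x, y ∈ M`. -/
def StronglyCohomologous (f f' : M → M → A) : Prop :=
  ∃ g : M → AddUnits A, g 1 = 0 ∧
    ∀ x y : M, f x y = f' x y + x • (g y : A) + ((-(g (x * y)) : AddUnits A) : A) + (g x : A)

/-- Two `2`-cocycles `f, f'` are cohomologous if there are functions `g₁, g₂ : M → A` with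
`g₁ 1 = 0 = g₂ 1` and
`f (x,y) + x • g₁ y + g₁ x + g₂ (x*y) = f' (x,y) + x • g₂ y + g₂ x + g₁ (x*y)`. -/
def Cohomologous (f f' : M → M → A) : Prop :=
  ∃ g₁ g₂ : M → A, g₁ 1 = 0 ∧ g₂ 1 = 0 ∧
    ∀ x y : M, f x y + x • g₁ y + g₁ x + g₂ (x * y)
      = f' x y + x • g₂ y + g₂ x + g₁ (x * y)

variable {M A}

/-- The underlying set `B_f = A × M` of the Schreier extension `E_f` associated with a
`2`-cocycle `f`. -/
@[ext] structure Bf (f : Cocycle M A) where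
  a : A
  x : M

namespace Bf

variable (f : Cocycle M A)

/-- The composition `(a₁, x) + (a₂, y) = (a₁ + x • a₂ + f (x, y), x * y)` on `B_f`. -/
protected def add (p q : Bf f) : Bf f := ⟨p.a + p.x • q.a + f.1 p.x q.x, p.x * q.x⟩

instance : Zero (Bf f) := ⟨⟨0, 1⟩⟩
instance : Add (Bf f) := ⟨Bf.add f⟩

instance : AddMonoid (Bf f) where
  nsmul := nsmulRec
  add_assoc p q r := by
    show (Bf.add f (Bf.add f p q) r) = Bf.add f p (Bf.add f q r)
    unfold Bf.add
    have h := f.2.2.2 p.x q.x r.x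
    simp only [Bf.mk.injEq]
    refine ⟨?_, mul_assoc _ _ _⟩
    calc p.a + p.x • q.a + f.1 p.x q.x + (p.x * q.x) • r.a + f.1 (p.x * q.x) r.x
        = p.a + p.x • q.a + p.x • (q.x • r.a) + (f.1 (p.x * q.x) r.x + f.1 p.x q.x) := by
          rw [mul_smul]; abel
      _ = p.a + p.x • q.a + p.x • (q.x • r.a) + (p.x • f.1 q.x r.x + f.1 p.x (q.x * r.x)) := by
          rw [h]
      _ = p.a + p.x • (q.a + q.x • r.a + f.1 q.x r.x) + f.1 p.x (q.x * r.x) := by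
          rw [smul_add, smul_add]; abel
  zero_add p := by
    show Bf.add f ⟨0, 1⟩ p = p
    unfold Bf.add
    cases p with
    | mk a x => simp [f.2.2.1 x]
  add_zero p := by
    show Bf.add f p ⟨0, 1⟩ = p
    unfold Bf.add
    cases p with
    | mk a x => simp [f.2.1 x]

theorem add_def (p q : Bf f) : p + q = ⟨p.a + p.x • q.a + f.1 p.x q.x, p.x * q.x⟩ := rfl

theorem zero_def : (0 : Bf f) = ⟨0, 1⟩ := rfl

end Bf

/-- The inclusion `κ_f : A → B_f`, `a ↦ (a, 1)`. -/
def kappaF (f : Cocycle M A) : A →+ Bf f where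
  toFun a := ⟨a, 1⟩
  map_zero' := rfl
  map_add' a b := by
    rw [Bf.add_def]
    simp [f.2.2.1]

/-- The projection `σ_f : B_f → M`, `(a, x) ↦ x`. -/
def sigmaF (f : Cocycle M A) : Bf f → M := fun p => p.x

end Cocycles

section ExtOfCocycle

variable {M : Type u} {A : Type v} [Monoid M] [AddCommMonoid A] [DistribMulAction M A]

/-- The Schreier extension `E_f : A →^{κ_f} B_f →^{σ_f} M` of the `M`-semimodule `A` by `M`
associated with a `2`-cocycle `f`. -/
def extOfCocycle (f : Cocycle M A) : SchreierExtension M A where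
  B := Bf f
  κ := kappaF f
  σ := sigmaF f
  sigma_zero := rfl
  sigma_add _ _ := rfl
  kappa_inj a b h := congrArg Bf.a h
  sigma_surj x := ⟨⟨0, x⟩, rfl⟩
  range_eq b := by
    constructor
    · intro h
      exact ⟨b.a, by cases b; cases h; rfl⟩
    · rintro ⟨a, rfl⟩
      rfl
  rep_exists x := by
    refine ⟨⟨0, x⟩, rfl, fun b hb => ⟨b.a, ?_, ?_⟩⟩
    · cases b with
      | mk a y =>
        have hx : y = x := hb
        subst hx
        show Bf.mk a y = kappaF f a + ⟨0, y⟩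
        rw [show kappaF f a = ⟨a, 1⟩ from rfl, Bf.add_def]
        simp [f.2.2.1]
    · intro a' ha'
      rw [show kappaF f a' = ⟨a', 1⟩ from rfl, Bf.add_def] at ha'
      have := congrArg Bf.a ha'
      simpa [f.2.2.1] using this.symm
  compat a b := by
    show b + kappaF f a = kappaF f (b.x • a) + b
    rw [show kappaF f a = ⟨a, 1⟩ from rfl, show kappaF f (b.x • a) = ⟨b.x • a, 1⟩ from rfl,
      Bf.add_def, Bf.add_def]
    simp [f.2.1, f.2.2.1, add_comm]

end ExtOfCocycle

section Semidirect

variable (M : Type u) (A : Type v) [Monoid M] [AddCommMonoid A] [DistribMulAction M A]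

/-- The underlying set `A × M` of the semidirect product `A ⋊ M`. -/
@[ext] structure SemidirectCarrier where
  a : A
  x : M

namespace SemidirectCarrier

variable {M A}

/-- The composition `(a₁, x) + (a₂, y) = (a₁ + x • a₂, x * y)` on `A ⋊ M`. -/
protected def add (p q : SemidirectCarrier M A) : SemidirectCarrier M A :=
  ⟨p.a + p.x • q.a, p.x * q.x⟩

instance : Zero (SemidirectCarrier M A) := ⟨⟨0, 1⟩⟩
instance : Add (SemidirectCarrier M A) := ⟨SemidirectCarrier.add⟩

instance : AddMonoid (SemidirectCarrier M A) where
  nsmul := nsmulRec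
  add_assoc p q r := by
    show SemidirectCarrier.add (SemidirectCarrier.add p q) r
      = SemidirectCarrier.add p (SemidirectCarrier.add q r)
    unfold SemidirectCarrier.add
    simp only [SemidirectCarrier.mk.injEq]
    exact ⟨by rw [smul_add, mul_smul]; abel, mul_assoc _ _ _⟩
  zero_add p := by
    show SemidirectCarrier.add ⟨0, 1⟩ p = p
    unfold SemidirectCarrier.add
    cases p with
    | mk a x => simp
  add_zero p := by
    show SemidirectCarrier.add p ⟨0, 1⟩ = p
    unfold SemidirectCarrier.add
    cases p with
    | mk a x => simp

theorem add_def (p q : SemidirectCarrier M A) : p + q = ⟨p.a + p.x • q.a, p.x * q.x⟩ := rfl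

end SemidirectCarrier

/-- The semidirect product extension `0 : A →^ι A ⋊ M →^π M`, with `ι a = (a, 1)` and
`π (a, x) = x`. -/
def semidirectExtension : SchreierExtension M A where
  B := SemidirectCarrier M A
  κ :=
    { toFun := fun a => ⟨a, 1⟩
      map_zero' := rfl
      map_add' := fun a b => by rw [SemidirectCarrier.add_def]; simp }
  σ := fun p => p.x
  sigma_zero := rfl
  sigma_add _ _ := rfl
  kappa_inj a b h := congrArg SemidirectCarrier.a h
  sigma_surj x := ⟨⟨0, x⟩, rfl⟩
  range_eq b := by
    constructor
    · intro h
      exact ⟨b.a, by cases b; cases h; rfl⟩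
    · rintro ⟨a, rfl⟩
      rfl
  rep_exists x := by
    refine ⟨⟨0, x⟩, rfl, fun b hb => ⟨b.a, ?_, ?_⟩⟩
    · cases b with
      | mk a y =>
        have hx : y = x := hb
        subst hx
        show SemidirectCarrier.mk a y = SemidirectCarrier.add ⟨a, 1⟩ ⟨0, y⟩
        unfold SemidirectCarrier.add
        simp
    · intro a' ha'
      have := congrArg SemidirectCarrier.a ha'
      simpa [SemidirectCarrier.add_def] using this.symm
  compat a b := by
    show SemidirectCarrier.add b ⟨a, 1⟩ = SemidirectCarrier.add ⟨b.x • a, 1⟩ b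
    unfold SemidirectCarrier.add
    simp [add_comm]

end Semidirect

@[to_additive]
theorem isUnit_iff_forall_existsUnique_mul {N : Type*} [Monoid N] (u : N) :
    IsUnit u ↔ ∀ c : N, ∃! a : N, c = a * u := by
  constructor
  · rintro ⟨v, rfl⟩ c
    refine ⟨c * ↑v⁻¹, (v.inv_mul_cancel_right c).symm, fun a ha => ?_⟩
    rw [ha, Units.mul_inv_cancel_right]
  · intro h
    obtain ⟨a, hau, -⟩ := h 1
    obtain ⟨_, -, huniq⟩ := h u
    -- uniqueness of the solution of `u = _ * u` makes the left inverse `a` two-sided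
    have hua : u * a = 1 :=
      (huniq (u * a) (by rw [mul_assoc, ← hau, mul_one] : u = u * a * u)).trans
        (huniq 1 (one_mul u).symm).symm
    exact isUnit_iff_exists.2 ⟨a, hua, hau.symm⟩

section ExtOfCocycleRepresentatives

variable {M : Type u} {A : Type v} [Monoid M] [AddCommMonoid A] [DistribMulAction M A]
  (f : Cocycle M A)

theorem kappaF_apply (a : A) : kappaF f a = ⟨a, 1⟩ := rfl

theorem kappaF_add (a : A) (p : Bf f) : kappaF f a + p = ⟨a + p.a, p.x⟩ := by
  rw [kappaF_apply, Bf.add_def]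
  simp only [one_smul, one_mul, f.2.2.1, add_zero]

theorem eq_kappaF_add_iff {p q : Bf f} (h : p.x = q.x) (a : A) :
    p = kappaF f a + q ↔ p.a = a + q.a := by
  rw [kappaF_add, Bf.ext_iff]
  simp only [h, and_true]

theorem extOfCocycle_isRep_iff (x : M) (u : Bf f) :
    (extOfCocycle f).IsRep x u ↔ IsAddUnit u.a ∧ u.x = x := by
  change (u.x = x ∧ ∀ p : Bf f, p.x = x → ∃! a, p = kappaF f a + u) ↔ _
  rw [isAddUnit_iff_forall_existsUnique_add]
  constructor
  · rintro ⟨hx, hrep⟩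
    refine ⟨fun c => ?_, hx⟩
    simpa only [eq_kappaF_add_iff f (p := ⟨c, x⟩) hx.symm] using hrep ⟨c, x⟩ rfl
  · rintro ⟨hu, hx⟩
    refine ⟨hx, fun p hp => ?_⟩
    simpa only [eq_kappaF_add_iff f (hp.trans hx.symm)] using hu p.a

theorem mk_zero_add_mk_zero (x y : M) :
    (⟨0, x⟩ : Bf f) + ⟨0, y⟩ = kappaF f (f.1 x y) + ⟨0, x * y⟩ := by
  rw [kappaF_add, Bf.add_def]
  simp only [zero_add, smul_zero, add_zero]

end ExtOfCocycleRepresentatives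

/-- Let `M` be a monoid, `A` an `M`-semimodule and `f : M × M → A` a (normalized)
`2`-cocycle.  Then `B_f = A × M` with the composition
`(a₁, x) + (a₂, y) = (a₁ + x • a₂ + f (x, y), x * y)` is a monoid with identity `(0, 1)`;
the sequence `E_f : A →^{κ_f} B_f →^{σ_f} M` with `κ_f a = (a, 1)` and `σ_f (a, x) = x`
is a Schreier extension of the `M`-semimodule `A` by `M` whose representatives are exactly
the elements `(a, x)` with `a ∈ U(A)` invertible; and `f` is a factor set of `E_f`
relative to the representatives `(0, x)`. -/
theorem extOfCocycle_is_schreier {M : Type u} {A : Type v}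
    [Monoid M] [AddCommMonoid A] [DistribMulAction M A] (f : Cocycle M A) :
    -- the composition and the identity element of `B_f`
    (∀ p q : Bf f, p + q = ⟨p.a + p.x • q.a + f.1 p.x q.x, p.x * q.x⟩) ∧
    ((0 : Bf f) = ⟨0, 1⟩) ∧
    -- `B_f` is a monoid
    (∀ p q r : Bf f, p + q + r = p + (q + r)) ∧
    (∀ p : Bf f, 0 + p = p ∧ p + 0 = p) ∧
    -- `κ_f` and `σ_f` are as described
    (∀ a : A, (extOfCocycle f).κ a = ⟨a, 1⟩) ∧
    (∀ p : Bf f, (extOfCocycle f).σ p = p.x) ∧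
    -- `E_f` is a Schreier extension of the `M`-semimodule `A` by `M`
    ((extOfCocycle f).σ 0 = 1) ∧
    (∀ p q : Bf f, (extOfCocycle f).σ (p + q) = (extOfCocycle f).σ p * (extOfCocycle f).σ q) ∧
    Function.Injective (extOfCocycle f).κ ∧
    Function.Surjective (extOfCocycle f).σ ∧
    (∀ p : Bf f, (extOfCocycle f).σ p = 1 ↔ p ∈ Set.range (extOfCocycle f).κ) ∧
    (∀ x : M, ∃ u : Bf f, (extOfCocycle f).IsRep x u) ∧
    (∀ (a : A) (p : Bf f),
      p + kappaF f a = kappaF f (sigmaF f p • a) + p) ∧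
    -- the representatives of `E_f` are exactly the pairs `(a, x)` with `a` invertible
    (∀ (x : M) (u : Bf f), (extOfCocycle f).IsRep x u ↔ IsAddUnit u.a ∧ u.x = x) ∧
    -- `f` is a factor set of `E_f` for the representatives `(0, x)`
    (∀ x y : M,
      (⟨0, x⟩ : Bf f) + ⟨0, y⟩ = kappaF f (f.1 x y) + ⟨0, x * y⟩) := by
  let E := extOfCocycle f
  exact ⟨Bf.add_def f, rfl, add_assoc, fun p => ⟨zero_add p, add_zero p⟩, kappaF_apply f,
    fun _ => rfl, E.sigma_zero, E.sigma_add, E.kappa_inj, E.sigma_surj, E.range_eq,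
    E.rep_exists, E.compat, extOfCocycle_isRep_iff f, mk_zero_add_mk_zero f⟩
end

section
/- Let M be a monoid and E: A →^κ B →^σ M a Schreier extension of an M-semimodule A by M. Any two factor sets of E (arising from two choices of representatives u_x and u'_x with u_1 = u'_1 = 0) are strongly cohomologous 2-cocycles. -/
universe u v

/-- Let `M` be a monoid and `E : A →^κ B →^σ M` a Schreier extension of an `M`-semimodule
`A` by `M`.  Any two factor sets of `E` — arising from two choices `u, u'` of
representatives with `u 1 = 0 = u' 1` via `u x + u y = κ (f (x, y)) + u (x * y)` — are
strongly cohomologous. -/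
theorem factor_sets_strongly_cohomologous {M : Type u} {A : Type v}
    [Monoid M] [AddCommMonoid A] [DistribMulAction M A]
    (E : SchreierExtension M A) (u u' : M → E.B)
    (hu : ∀ x : M, E.IsRep x (u x)) (hu' : ∀ x : M, E.IsRep x (u' x))
    (hu1 : u 1 = 0) (hu1' : u' 1 = 0)
    (f f' : M → M → A)
    (hf : ∀ x y : M, u x + u y = E.κ (f x y) + u (x * y))
    (hf' : ∀ x y : M, u' x + u' y = E.κ (f' x y) + u' (x * y)) :
    StronglyCohomologous M A f f' := by
  classical
  choose g hg _ using fun x => (hu' x).2 (u x) (hu x).1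
  choose h hh _ using fun x => (hu x).2 (u' x) (hu' x).1
  have hκσ : ∀ a : A, E.σ (E.κ a) = 1 := fun a => (E.range_eq _).2 ⟨a, rfl⟩
  have cancel : ∀ (x : M) (v : E.B), E.IsRep x v → ∀ a₁ a₂ : A,
      E.κ a₁ + v = E.κ a₂ + v → a₁ = a₂ := by
    intro x v hv a₁ a₂ hEq
    have hσ : E.σ (E.κ a₁ + v) = x := by
      rw [E.sigma_add, hκσ, hv.1, one_mul]
    obtain ⟨a, _, ha⟩ := hv.2 (E.κ a₁ + v) hσ
    exact (ha a₁ rfl).trans (ha a₂ hEq).symm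
  have hgh : ∀ x : M, g x + h x = 0 := by
    intro x
    apply cancel x (u x) (hu x)
    rw [map_add, map_zero, zero_add, add_assoc, ← hh x, ← hg x]
  have hg1 : g 1 = 0 := by
    apply E.kappa_inj
    have := hg 1
    rw [hu1, hu1', add_zero] at this
    rw [map_zero, ← this]
  -- main identity in A
  have main : ∀ x y : M, f x y + g (x * y) = g x + x • g y + f' x y := by
    intro x y
    apply cancel (x * y) (u' (x * y)) (hu' (x * y))
    have e1 : E.κ (f x y + g (x * y)) + u' (x * y) = u x + u y := by
      rw [map_add, add_assoc, ← hg (x * y), ← hf x y]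
    have e2 : E.κ (g x + x • g y + f' x y) + u' (x * y) = u x + u y := by
      have comp : u' x + E.κ (g y) = E.κ (x • g y) + u' x := by
        have := E.compat (g y) (u' x)
        rwa [(hu' x).1] at this
      rw [hg x, hg y]
      rw [map_add, map_add, add_assoc, add_assoc, ← hf' x y,
        ← add_assoc (E.κ (x • g y)), ← comp]
      rw [add_assoc, add_assoc]
    rw [e1, e2]
  refine ⟨fun x => ⟨g x, h x, hgh x, by rw [add_comm]; exact hgh x⟩, ?_, ?_⟩
  · ext
    exact hg1
  · intro x y
    show f x y = f' x y + x • g y + h (x * y) + g x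
    have := main x y
    calc f x y = f x y + (g (x * y) + h (x * y)) := by rw [hgh, add_zero]
      _ = (f x y + g (x * y)) + h (x * y) := by rw [add_assoc]
      _ = (g x + x • g y + f' x y) + h (x * y) := by rw [this]
      _ = f' x y + x • g y + h (x * y) + g x := by abel
end

section
/- Let M be a monoid, A an M-semimodule, and f, f': M × M → A 2-cocycles. If f and f' are strongly cohomologous, then the Schreier extensions E_f and E_{f'} are congruent; explicitly, if f(x,y) = f'(x,y) + xg(y) − g(xy) + g(x) for some g: M → U(A) with g(1) = 0, then β(a,x) = (a + g(x), x) defines a monoid homomorphism B_f → B_{f'} such that (1_A, β, 1_M) is a morphism of extensions. -/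
universe u v

attribute [reducible] Cocycle

/-! Shifting by `g` turns the identity `f (x, y) + g (x*y) = f' (x, y) + x • g y + g x` into
additivity of `β (a, x) = (a + g x, x)`. The representatives of `E_f` over `x` are exactly the
pairs `(a, x)` with `a ∈ U(A)`, so `β` preserves them as soon as `g` takes values in `U(A)`. -/

namespace Bf

variable {M : Type u} {A : Type v} [Monoid M] [AddCommMonoid A] [DistribMulAction M A]

theorem kappaF_add {f : Cocycle M A} (a : A) (p : Bf f) : kappaF f a + p = ⟨a + p.a, p.x⟩ := by
  rw [show kappaF f a = ⟨a, 1⟩ from rfl, add_def, one_smul, one_mul, f.2.2.1, add_zero]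

theorem isRep_extOfCocycle_iff {f : Cocycle M A} (x : M) (u : Bf f) :
    (extOfCocycle f).IsRep x u ↔ u.x = x ∧ IsAddUnit u.a := by
  change (u.x = x ∧ ∀ b : Bf f, b.x = x → ∃! a : A, b = kappaF f a + u) ↔ _
  simp only [kappaF_add]
  constructor
  · rintro ⟨rfl, hrep⟩
    obtain ⟨a, ha, -⟩ := hrep ⟨0, u.x⟩ rfl
    exact ⟨rfl, .of_add_eq_zero_right a (congrArg Bf.a ha).symm⟩
  · rintro ⟨rfl, w, hw⟩
    refine ⟨rfl, fun b hb => ⟨b.a + ↑(-w), ?_, fun a ha => ?_⟩⟩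
    · ext
      · rw [← hw, AddUnits.neg_add_cancel_right]
      · exact hb
    · rw [AddUnits.eq_add_neg_iff_add_eq, hw, ha]

variable {F F' : Cocycle M A} {g : M → A}

def shift (g : M → A) (hg : g 1 = 0)
    (hfg : ∀ x y, F.1 x y + g (x * y) = F'.1 x y + x • g y + g x) : Bf F →+ Bf F' where
  toFun p := ⟨p.a + g p.x, p.x⟩
  map_zero' := by rw [zero_def, zero_def, hg, add_zero]
  map_add' p q := by
    rw [add_def, add_def]
    ext
    · calc p.a + p.x • q.a + F.1 p.x q.x + g (p.x * q.x)
          = p.a + p.x • q.a + (F'.1 p.x q.x + p.x • g q.x + g p.x) := by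
            rw [add_assoc _ (F.1 _ _), hfg]
        _ = p.a + g p.x + p.x • (q.a + g q.x) + F'.1 p.x q.x := by
            rw [smul_add]; abel
    · rfl

theorem isSchreierHom_shift (hg : g 1 = 0)
    (hfg : ∀ x y, F.1 x y + g (x * y) = F'.1 x y + x • g y + g x) (hunit : ∀ x, IsAddUnit (g x)) :
    IsSchreierHom (extOfCocycle F) (extOfCocycle F') (AddMonoidHom.id A) (shift g hg hfg) := by
  refine ⟨fun a => ?_, fun _ => rfl, fun x u hu => ?_⟩
  · change (⟨a + g 1, 1⟩ : Bf F') = ⟨a, 1⟩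
    rw [hg, add_zero]
  · obtain ⟨hux, hua⟩ := (isRep_extOfCocycle_iff (f := F) x u).1 hu
    exact (isRep_extOfCocycle_iff x _).2 ⟨hux, hua.add (hunit u.x)⟩

end Bf


/-- Let `M` be a monoid, `A` an `M`-semimodule, and `f, f' : M × M → A` `2`-cocycles.
If `f` and `f'` are strongly cohomologous, say
`f (x, y) = f' (x, y) + x • g y − g (x*y) + g x` for some `g : M → U(A)` with `g 1 = 0`,
then `β (a, x) = (a + g x, x)` defines a monoid homomorphism `B_f → B_{f'}` such that
`(1_A, β, 1_M)` is a morphism of extensions; in particular the Schreier extensions `E_f`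
and `E_{f'}` are congruent. -/
theorem stronglyCohomologous_congruent {M : Type u} {A : Type v}
    [Monoid M] [AddCommMonoid A] [DistribMulAction M A]
    (f f' : M → M → A) (hf : IsCocycle M A f) (hf' : IsCocycle M A f')
    (g : M → AddUnits A) (hg1 : g 1 = 0)
    (hsc : ∀ x y : M,
      f x y = f' x y + x • (g y : A) + ((-(g (x * y)) : AddUnits A) : A) + (g x : A)) :
    ∃ β : Bf (⟨f, hf⟩ : Cocycle M A) →+ Bf (⟨f', hf'⟩ : Cocycle M A),
      (∀ p : Bf (⟨f, hf⟩ : Cocycle M A), β p = ⟨p.a + (g p.x : A), p.x⟩) ∧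
      IsSchreierHom (extOfCocycle ⟨f, hf⟩) (extOfCocycle ⟨f', hf'⟩) (AddMonoidHom.id A) β ∧
      SchreierCongruent (extOfCocycle ⟨f, hf⟩) (extOfCocycle ⟨f', hf'⟩) := by
  have hfg : ∀ x y, f x y + (g (x * y) : A) = f' x y + x • (g y : A) + g x := fun x y => by
    rw [hsc, add_right_comm _ _ (g x : A), add_assoc _ _ (g (x * y) : A), AddUnits.neg_add,
      add_zero]
  have hg : ((g 1 : AddUnits A) : A) = 0 := by rw [hg1, AddUnits.val_zero]
  have hβ := Bf.isSchreierHom_shift (F := ⟨f, hf⟩) (F' := ⟨f', hf'⟩) (g := fun x => (g x : A))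
    hg hfg fun x => (g x).isAddUnit
  exact ⟨_, fun _ => rfl, hβ, _, hβ⟩
end

section
/- Let M be a monoid, A an M-semimodule, and f, f': M × M → A 2-cocycles. If the Schreier extensions E_f and E_{f'} are congruent, then f and f' are strongly cohomologous. -/
universe u v

/-
A congruence `β : B_f → B_{f'}` fixes `A` and the `M`-coordinate, so it is determined
by `g x := (β (0, x)).a` through `β (a, x) = (a + g x, x)`. Additivity of `β` on `(0, x) + (0, y)`
gives `f (x, y) + g (x y) = g x + x • g y + f' (x, y)`, and since `(0, x)` is a representative, so
is `(g x, x)`; writing the element `(0, x)` of `B_{f'}` over it shows that `g x` has a negative.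
-/

theorem stronglyCohomologous_of_isAddUnit {M : Type u} {A : Type v} [Monoid M]
    [AddCommMonoid A] [DistribMulAction M A] {f f' : M → M → A} (g : M → A)
    (hg : ∀ x, IsAddUnit (g x)) (hg_one : g 1 = 0)
    (h : ∀ x y, f x y + g (x * y) = g x + x • g y + f' x y) :
    StronglyCohomologous M A f f' := by
  choose u hu using hg
  refine ⟨u, AddUnits.ext (by rw [hu, hg_one]; rfl), fun x y => ?_⟩
  simp only [hu]
  calc f x y = f x y + (g (x * y) + ↑(-u (x * y))) := by
        rw [← hu, AddUnits.add_neg, add_zero]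
    _ = f' x y + x • g y + ↑(-u (x * y)) + g x := by
        rw [← add_assoc, h]; abel

namespace Bf

variable {M : Type u} {A : Type v} [Monoid M] [AddCommMonoid A] [DistribMulAction M A]
  {f f' : Cocycle M A}

theorem mk_eq_kappaF_add (a : A) (x : M) : (⟨a, x⟩ : Bf f) = kappaF f a + ⟨0, x⟩ := by
  rw [show kappaF f a = ⟨a, 1⟩ from rfl, add_def]
  simp [f.2.2.1 x]

theorem isRep_zero_mk (x : M) : (extOfCocycle f).IsRep x ⟨0, x⟩ := by
  refine ⟨rfl, fun (b : Bf f) hb => ⟨b.a, ?_, fun a (ha : b = kappaF f a + ⟨0, x⟩) => ?_⟩⟩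
  · obtain ⟨a, y⟩ := b
    obtain rfl : y = x := hb
    exact mk_eq_kappaF_add a y
  · rw [← mk_eq_kappaF_add] at ha
    exact (congrArg Bf.a ha).symm

theorem isAddUnit_a_of_isRep {x : M} {u : Bf f} (h : (extOfCocycle f).IsRep x u) :
    IsAddUnit u.a := by
  obtain ⟨a, ha, -⟩ := h.2 ⟨0, x⟩ rfl
  have hx : (⟨0, x⟩ : Bf f) = kappaF f a + u := ha
  rw [show kappaF f a = ⟨a, 1⟩ from rfl, add_def] at hx
  exact IsAddUnit.of_add_eq_zero_right a (by simpa [f.2.2.1] using (congrArg Bf.a hx).symm)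

def cochainOfHom (β : Bf f →+ Bf f') (x : M) : A := (β ⟨0, x⟩).a

theorem cochainOfHom_one (β : Bf f →+ Bf f') : cochainOfHom β 1 = 0 :=
  congrArg Bf.a (map_zero β)

variable {β : Bf f →+ Bf f'} (hκ : ∀ a, β (kappaF f a) = kappaF f' a) (hσ : ∀ b, (β b).x = b.x)
include hκ hσ

theorem map_mk (a : A) (x : M) : β ⟨a, x⟩ = ⟨a + cochainOfHom β x, x⟩ := by
  rw [mk_eq_kappaF_add, map_add, hκ, show kappaF f' a = ⟨a, 1⟩ from rfl, add_def]
  ext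
  · simp [cochainOfHom, hσ ⟨0, x⟩, f'.2.2.1]
  · simp [hσ ⟨0, x⟩]

theorem add_cochainOfHom_mul (x y : M) :
    f.1 x y + cochainOfHom β (x * y) = cochainOfHom β x + x • cochainOfHom β y + f'.1 x y := by
  have h := congrArg Bf.a (map_add β ⟨0, x⟩ ⟨0, y⟩)
  rw [add_def, map_mk hκ hσ, map_mk hκ hσ, map_mk hκ hσ, add_def] at h
  simpa using h

end Bf

/-- Let `M` be a monoid, `A` an `M`-semimodule, and `f, f' : M × M → A` `2`-cocycles.
If the Schreier extensions `E_f` and `E_{f'}` are congruent, then `f` and `f'` are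
strongly cohomologous. -/
theorem congruent_stronglyCohomologous {M : Type u} {A : Type v}
    [Monoid M] [AddCommMonoid A] [DistribMulAction M A]
    (f f' : M → M → A) (hf : IsCocycle M A f) (hf' : IsCocycle M A f')
    (hcong : SchreierCongruent (extOfCocycle ⟨f, hf⟩) (extOfCocycle ⟨f', hf'⟩)) :
    StronglyCohomologous M A f f' := by
  obtain ⟨β, hκ, hσ, hrep⟩ := hcong
  refine stronglyCohomologous_of_isAddUnit (Bf.cochainOfHom β) (fun x => ?_)
    (Bf.cochainOfHom_one β) (Bf.add_cochainOfHom_mul hκ hσ)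
  exact Bf.isAddUnit_a_of_isRep (hrep x _ (Bf.isRep_zero_mk x))
end

section
/- Let M be a monoid and A an M-semimodule. The map ζ(M,A): 𝓗²(M,A) → 𝓔(M,A) sending the strong-cohomology class of a 2-cocycle f to the congruence class of the extension E_f is a well-defined bijection of pointed sets; the class of the zero 2-cocycle corresponds to the class of the semidirect product extension 0: A ↣ A⋊M ↠ M. -/
universe u v

section ZetaAux

variable {M : Type u} {A : Type v} [Monoid M] [AddCommMonoid A] [DistribMulAction M A]

namespace SchreierExtension

variable (E : SchreierExtension M A)

theorem kappa_sigma (a : A) : E.σ (E.κ a) = 1 := (E.range_eq _).2 ⟨a, rfl⟩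

theorem rep_cancel {x : M} {u : E.B} (hu : E.IsRep x u) {a a' : A}
    (h : E.κ a + u = E.κ a' + u) : a = a' := by
  have hb : E.σ (E.κ a + u) = x := by
    rw [E.sigma_add, E.kappa_sigma, one_mul, hu.1]
  exact (hu.2 _ hb).unique rfl h

theorem zero_isRep : E.IsRep 1 0 := by
  refine ⟨E.sigma_zero, fun b hb => ?_⟩
  obtain ⟨a, rfl⟩ := (E.range_eq b).1 hb
  refine ⟨a, (add_zero _).symm, fun a' h => ?_⟩
  have h' : E.κ a = E.κ a' + 0 := h
  rw [add_zero] at h'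
  exact (E.kappa_inj h').symm

theorem isRep_add_unit {x : M} {u : E.B} (hu : E.IsRep x u) (a : AddUnits A) :
    E.IsRep x (E.κ (a : A) + u) := by
  have key : ∀ y : A, E.κ y + (E.κ (a : A) + u) = E.κ (y + (a : A)) + u := fun y => by
    rw [map_add, add_assoc]
  refine ⟨by rw [E.sigma_add, E.kappa_sigma, one_mul, hu.1], fun b hb => ?_⟩
  obtain ⟨c, hc, hcu⟩ := hu.2 b hb
  refine ⟨c + ((-a : AddUnits A) : A), ?_, ?_⟩
  · show b = E.κ (c + ((-a : AddUnits A) : A)) + (E.κ (a : A) + u)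
    rw [key, add_assoc, AddUnits.neg_add, add_zero, hc]
  · intro y hy
    have hy' : b = E.κ (y + (a : A)) + u := by rw [← key]; exact hy
    have h1 : y + (a : A) = c := hcu _ hy'
    calc y = y + ((a : A) + ((-a : AddUnits A) : A)) := by rw [AddUnits.add_neg, add_zero]
      _ = c + ((-a : AddUnits A) : A) := by rw [← add_assoc, h1]

theorem rep_diff {x : M} {u u' : E.B} (hu : E.IsRep x u) (hu' : E.IsRep x u') :
    ∃ a : AddUnits A, u' = E.κ (a : A) + u := by
  obtain ⟨a, ha, -⟩ := hu.2 u' hu'.1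
  obtain ⟨b, hb, -⟩ := hu'.2 u hu.1
  have h0 : a + b = 0 := by
    apply E.rep_cancel hu'
    rw [map_add, add_assoc, ← hb, ← ha, map_zero, zero_add]
  exact ⟨⟨a, b, h0, (add_comm b a).trans h0⟩, ha⟩

/-- A choice of representatives, normalized so that the representative over `1` is `0`. -/
noncomputable def reps (x : M) : E.B :=
  @dite _ (x = 1) (Classical.propDecidable _) (fun _ => 0) (fun _ => (E.rep_exists x).choose)

theorem reps_one : E.reps 1 = 0 := dif_pos rfl

theorem reps_isRep (x : M) : E.IsRep x (E.reps x) := by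
  by_cases h : x = 1
  · subst h
    rw [E.reps_one]
    exact E.zero_isRep
  · have hx : E.reps x = (E.rep_exists x).choose := dif_neg h
    rw [hx]
    exact (E.rep_exists x).choose_spec

theorem sigma_reps (x : M) : E.σ (E.reps x) = x := (E.reps_isRep x).1

theorem sigma_reps_add (x y : M) : E.σ (E.reps x + E.reps y) = x * y := by
  rw [E.sigma_add, E.sigma_reps, E.sigma_reps]

/-- The `2`-cocycle associated with the extension `E` and the chosen representatives. -/
noncomputable def cocFun : M → M → A := fun x y =>
  ((E.reps_isRep (x * y)).2 (E.reps x + E.reps y) (E.sigma_reps_add x y)).choose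

theorem cocFun_spec (x y : M) :
    E.reps x + E.reps y = E.κ (E.cocFun x y) + E.reps (x * y) :=
  ((E.reps_isRep (x * y)).2 (E.reps x + E.reps y) (E.sigma_reps_add x y)).choose_spec.1

theorem cocFun_eq {x y : M} {a : A}
    (h : E.reps x + E.reps y = E.κ a + E.reps (x * y)) : E.cocFun x y = a :=
  E.rep_cancel (E.reps_isRep (x * y)) ((E.cocFun_spec x y).symm.trans h)

theorem compat' (a : A) (x : M) :
    E.reps x + E.κ a = E.κ (x • a) + E.reps x := by
  rw [E.compat, E.sigma_reps]

theorem cocFun_isCocycle : IsCocycle M A E.cocFun := by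
  refine ⟨fun x => E.cocFun_eq ?_, fun y => E.cocFun_eq ?_, fun x y z => ?_⟩
  · rw [E.reps_one, add_zero, map_zero, zero_add, mul_one]
  · rw [E.reps_one, zero_add, map_zero, zero_add, one_mul]
  · have h1 : E.reps x + E.reps y + E.reps z
        = E.κ (E.cocFun (x * y) z + E.cocFun x y) + E.reps (x * y * z) := by
      rw [E.cocFun_spec x y, add_assoc, E.cocFun_spec (x * y) z, ← add_assoc, ← map_add,
        add_comm (E.cocFun x y) (E.cocFun (x * y) z)]
    have h2 : E.reps x + E.reps y + E.reps z
        = E.κ (x • E.cocFun y z + E.cocFun x (y * z)) + E.reps (x * y * z) := by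
      rw [add_assoc, E.cocFun_spec y z, ← add_assoc, E.compat', add_assoc,
        E.cocFun_spec x (y * z), map_add, ← add_assoc, ← mul_assoc]
    exact E.rep_cancel (E.reps_isRep (x * y * z)) (h2.symm.trans h1)

/-- The `2`-cocycle associated with the extension `E`, as an element of `Cocycle M A`. -/
noncomputable def cocOf : Cocycle M A := ⟨E.cocFun, E.cocFun_isCocycle⟩

end SchreierExtension

theorem isRep_extOfCocycle (f : Cocycle M A) (x : M) (p : (extOfCocycle f).B) :
    (extOfCocycle f).IsRep x p ↔ p.x = x ∧ IsAddUnit p.a := by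
  have hadd : ∀ (a : A) (q : (extOfCocycle f).B),
      (extOfCocycle f).κ a + q = (⟨a + q.a, q.x⟩ : Bf f) := by
    intro a q
    have h1 : a + (1 : M) • q.a + f.1 1 q.x = a + q.a := by
      rw [one_smul, f.2.2.1, add_zero]
    exact Bf.ext h1 (one_mul q.x)
  constructor
  · rintro ⟨hx, hrep⟩
    refine ⟨hx, ?_⟩
    obtain ⟨c, hc, -⟩ := hrep ⟨0, x⟩ rfl
    have hc' : (⟨0, x⟩ : Bf f) = (⟨c + p.a, p.x⟩ : Bf f) := by
      have hc2 : (⟨0, x⟩ : Bf f) = (extOfCocycle f).κ c + p := hc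
      rw [hc2, hadd]
    have h0 : (0 : A) = c + p.a := congrArg Bf.a hc'
    exact ⟨⟨p.a, c, (add_comm p.a c).trans h0.symm, h0.symm⟩, rfl⟩
  · rintro ⟨hx, ⟨w, hw⟩⟩
    refine ⟨hx, fun b hb => ?_⟩
    have hbx : b.x = x := hb
    refine ⟨b.a + ((-w : AddUnits A) : A), ?_, ?_⟩
    · show b = (extOfCocycle f).κ (b.a + ((-w : AddUnits A) : A)) + p
      rw [hadd]
      refine Bf.ext ?_ (hbx.trans hx.symm)
      show b.a = b.a + ((-w : AddUnits A) : A) + p.a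
      rw [add_assoc, ← hw, AddUnits.neg_add, add_zero]
    · intro y hy
      have hy' : b = (extOfCocycle f).κ y + p := hy
      rw [hadd] at hy'
      have hya : b.a = y + p.a := congrArg Bf.a hy'
      rw [hya, ← hw, add_assoc, AddUnits.add_neg, add_zero]

theorem isRep_semidirect (x : M) (p : (semidirectExtension M A).B) :
    (semidirectExtension M A).IsRep x p ↔ p.x = x ∧ IsAddUnit p.a := by
  have hadd : ∀ (a : A) (q : (semidirectExtension M A).B),
      (semidirectExtension M A).κ a + q = (⟨a + q.a, q.x⟩ : SemidirectCarrier M A) := by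
    intro a q
    have h1 : a + (1 : M) • q.a = a + q.a := by rw [one_smul]
    exact SemidirectCarrier.ext h1 (one_mul q.x)
  constructor
  · rintro ⟨hx, hrep⟩
    refine ⟨hx, ?_⟩
    obtain ⟨c, hc, -⟩ := hrep ⟨0, x⟩ rfl
    have hc' : (⟨0, x⟩ : SemidirectCarrier M A) = (⟨c + p.a, p.x⟩ : SemidirectCarrier M A) := by
      have hc2 : (⟨0, x⟩ : SemidirectCarrier M A) = (semidirectExtension M A).κ c + p := hc
      rw [hc2, hadd]
    have h0 : (0 : A) = c + p.a := congrArg SemidirectCarrier.a hc'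
    exact ⟨⟨p.a, c, (add_comm p.a c).trans h0.symm, h0.symm⟩, rfl⟩
  · rintro ⟨hx, ⟨w, hw⟩⟩
    refine ⟨hx, fun b hb => ?_⟩
    have hbx : b.x = x := hb
    refine ⟨b.a + ((-w : AddUnits A) : A), ?_, ?_⟩
    · show b = (semidirectExtension M A).κ (b.a + ((-w : AddUnits A) : A)) + p
      rw [hadd]
      refine SemidirectCarrier.ext ?_ (hbx.trans hx.symm)
      show b.a = b.a + ((-w : AddUnits A) : A) + p.a
      rw [add_assoc, ← hw, AddUnits.neg_add, add_zero]
    · intro y hy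
      have hy' : b = (semidirectExtension M A).κ y + p := hy
      rw [hadd] at hy'
      have hya : b.a = y + p.a := congrArg SemidirectCarrier.a hy'
      rw [hya, ← hw, add_assoc, AddUnits.add_neg, add_zero]

/-- The canonical morphism from `E_{cocOf E}` to `E`. -/
noncomputable def betaOf (E : SchreierExtension M A) : Bf E.cocOf →+ E.B where
  toFun p := E.κ p.a + E.reps p.x
  map_zero' := by
    show E.κ (0 : A) + E.reps 1 = 0
    rw [map_zero, zero_add, E.reps_one]
  map_add' p q := by
    show E.κ (p.a + p.x • q.a + E.cocFun p.x q.x) + E.reps (p.x * q.x)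
      = (E.κ p.a + E.reps p.x) + (E.κ q.a + E.reps q.x)
    calc E.κ (p.a + p.x • q.a + E.cocFun p.x q.x) + E.reps (p.x * q.x)
        = E.κ p.a + (E.κ (p.x • q.a) + (E.κ (E.cocFun p.x q.x) + E.reps (p.x * q.x))) := by
          rw [map_add, map_add, add_assoc, add_assoc]
      _ = E.κ p.a + (E.κ (p.x • q.a) + (E.reps p.x + E.reps q.x)) := by
          rw [← E.cocFun_spec]
      _ = E.κ p.a + ((E.reps p.x + E.κ q.a) + E.reps q.x) := by
          rw [← add_assoc (E.κ (p.x • q.a)), ← E.compat']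
      _ = (E.κ p.a + E.reps p.x) + (E.κ q.a + E.reps q.x) := by
          rw [add_assoc (E.reps p.x), ← add_assoc]

theorem betaOf_isHom (E : SchreierExtension M A) :
    IsSchreierHom (extOfCocycle E.cocOf) E (AddMonoidHom.id A) (betaOf E) := by
  refine ⟨fun a => ?_, fun b => ?_, fun x u hu => ?_⟩
  · show E.κ a + E.reps 1 = E.κ a
    rw [E.reps_one, add_zero]
  · show E.σ (E.κ b.a + E.reps b.x) = b.x
    rw [E.sigma_add, E.kappa_sigma, one_mul, E.sigma_reps]
  · obtain ⟨hx, ha⟩ := (isRep_extOfCocycle E.cocOf x u).1 hu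
    obtain ⟨w, hw⟩ := ha
    have goal := E.isRep_add_unit (E.reps_isRep u.x) w
    rw [hw] at goal
    rw [← hx]
    exact goal

theorem congr_cocOf (E : SchreierExtension M A) :
    SchreierCongruent (extOfCocycle E.cocOf) E :=
  ⟨betaOf E, betaOf_isHom E⟩

theorem congr_cohomologous {E E' : SchreierExtension M A} (h : SchreierCongruent E E') :
    StronglyCohomologous M A E.cocFun E'.cocFun := by
  obtain ⟨β, hκ, hσ, hrep⟩ := h
  choose g hg using fun x => E'.rep_diff (E'.reps_isRep x) (hrep x (E.reps x) (E.reps_isRep x))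
  have hβ0 : (0 : E'.B) = E'.κ ((g 1 : AddUnits A) : A) := by
    have h1 := hg 1
    rw [E.reps_one, map_zero, E'.reps_one, add_zero] at h1
    exact h1
  have hg1 : g 1 = 0 := by
    apply AddUnits.ext
    apply E'.kappa_inj
    rw [AddUnits.val_zero, map_zero, ← hβ0]
  refine ⟨g, hg1, fun x y => ?_⟩
  have key : E'.κ ((g x : A) + x • (g y : A) + E'.cocFun x y) + E'.reps (x * y)
      = E'.κ (E.cocFun x y + (g (x * y) : A)) + E'.reps (x * y) := by
    calc E'.κ ((g x : A) + x • (g y : A) + E'.cocFun x y) + E'.reps (x * y)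
        = E'.κ (g x : A) + (E'.κ (x • (g y : A)) + (E'.κ (E'.cocFun x y) + E'.reps (x * y))) := by
          rw [map_add, map_add, add_assoc, add_assoc]
      _ = E'.κ (g x : A) + (E'.κ (x • (g y : A)) + (E'.reps x + E'.reps y)) := by
          rw [← E'.cocFun_spec]
      _ = E'.κ (g x : A) + ((E'.reps x + E'.κ (g y : A)) + E'.reps y) := by
          rw [← add_assoc (E'.κ (x • (g y : A))), ← E'.compat']
      _ = (E'.κ (g x : A) + E'.reps x) + (E'.κ (g y : A) + E'.reps y) := by
          rw [add_assoc (E'.reps x), ← add_assoc]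
      _ = β (E.reps x) + β (E.reps y) := by rw [← hg x, ← hg y]
      _ = β (E.reps x + E.reps y) := (map_add β _ _).symm
      _ = β (E.κ (E.cocFun x y) + E.reps (x * y)) := by rw [← E.cocFun_spec]
      _ = E'.κ (E.cocFun x y) + β (E.reps (x * y)) := by
          rw [map_add, hκ, AddMonoidHom.id_apply]
      _ = E'.κ (E.cocFun x y) + (E'.κ ((g (x * y) : AddUnits A) : A) + E'.reps (x * y)) := by
          rw [hg (x * y)]
      _ = E'.κ (E.cocFun x y + (g (x * y) : A)) + E'.reps (x * y) := by
          rw [map_add, add_assoc]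
  have heq : (g x : A) + x • (g y : A) + E'.cocFun x y = E.cocFun x y + (g (x * y) : A) :=
    E'.rep_cancel (E'.reps_isRep (x * y)) key
  calc E.cocFun x y
      = E.cocFun x y + ((g (x * y) : A) + ((-(g (x * y)) : AddUnits A) : A)) := by
        rw [AddUnits.add_neg, add_zero]
    _ = ((g x : A) + x • (g y : A) + E'.cocFun x y) + ((-(g (x * y)) : AddUnits A) : A) := by
        rw [← add_assoc, heq]
    _ = E'.cocFun x y + x • (g y : A) + ((-(g (x * y)) : AddUnits A) : A) + (g x : A) := by
        abel

theorem cocOf_extOfCocycle (F : Cocycle M A) :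
    StronglyCohomologous M A (extOfCocycle F).cocFun F.1 := by
  have hrx : ∀ x : M, ((extOfCocycle F).reps x).x = x := fun x => (extOfCocycle F).sigma_reps x
  have hua : ∀ x : M, IsAddUnit ((extOfCocycle F).reps x).a := fun x =>
    ((isRep_extOfCocycle F x ((extOfCocycle F).reps x)).1 ((extOfCocycle F).reps_isRep x)).2
  choose W hW using hua
  have hW1 : W 1 = 0 := by
    apply AddUnits.ext
    rw [hW 1, AddUnits.val_zero, (extOfCocycle F).reps_one]
    rfl
  refine ⟨W, hW1, fun x y => ?_⟩
  have ha : ((extOfCocycle F).reps x + (extOfCocycle F).reps y).a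
      = ((extOfCocycle F).κ ((extOfCocycle F).cocFun x y) + (extOfCocycle F).reps (x * y)).a :=
    congrArg Bf.a ((extOfCocycle F).cocFun_spec x y)
  have hLHS : ((extOfCocycle F).reps x + (extOfCocycle F).reps y).a
      = ((extOfCocycle F).reps x).a + x • ((extOfCocycle F).reps y).a + F.1 x y := by
    show ((extOfCocycle F).reps x).a + ((extOfCocycle F).reps x).x • ((extOfCocycle F).reps y).a
        + F.1 ((extOfCocycle F).reps x).x ((extOfCocycle F).reps y).x = _
    rw [hrx, hrx]
  have hRHS : ((extOfCocycle F).κ ((extOfCocycle F).cocFun x y) + (extOfCocycle F).reps (x * y)).a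
      = (extOfCocycle F).cocFun x y + ((extOfCocycle F).reps (x * y)).a := by
    show (extOfCocycle F).cocFun x y + (1 : M) • ((extOfCocycle F).reps (x * y)).a
        + F.1 1 ((extOfCocycle F).reps (x * y)).x = _
    rw [one_smul, F.2.2.1, add_zero]
  have heq : (W x : A) + x • (W y : A) + F.1 x y
      = (extOfCocycle F).cocFun x y + (W (x * y) : A) := by
    rw [hW x, hW y, hW (x * y), ← hLHS, ha, hRHS]
  calc (extOfCocycle F).cocFun x y
      = (extOfCocycle F).cocFun x y + ((W (x * y) : A) + ((-(W (x * y)) : AddUnits A) : A)) := by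
        rw [AddUnits.add_neg, add_zero]
    _ = ((W x : A) + x • (W y : A) + F.1 x y) + ((-(W (x * y)) : AddUnits A) : A) := by
        rw [← add_assoc, heq]
    _ = F.1 x y + x • (W y : A) + ((-(W (x * y)) : AddUnits A) : A) + (W x : A) := by
        abel

theorem extOf_congruent {F F' : Cocycle M A}
    (h : StronglyCohomologous M A F.1 F'.1) :
    SchreierCongruent (extOfCocycle F) (extOfCocycle F') := by
  obtain ⟨g, hg1, hg⟩ := h
  have hFg : ∀ x y : M, F.1 x y + (g (x * y) : A)
      = F'.1 x y + x • (g y : A) + (g x : A) := by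
    intro x y
    calc F.1 x y + (g (x * y) : A)
        = F'.1 x y + x • (g y : A) + (g x : A)
          + (((-(g (x * y)) : AddUnits A) : A) + (g (x * y) : A)) := by
          rw [hg x y]; abel
      _ = F'.1 x y + x • (g y : A) + (g x : A) := by
          rw [AddUnits.neg_add, add_zero]
  refine ⟨{ toFun := fun p => (⟨p.a + (g p.x : A), p.x⟩ : Bf F')
            map_zero' := ?_
            map_add' := ?_ }, ?_, ?_, ?_⟩
  · show (⟨(0 : A) + (g 1 : A), (1 : M)⟩ : Bf F') = ⟨0, 1⟩
    rw [hg1, AddUnits.val_zero, add_zero]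
  · intro p q
    show (⟨p.a + p.x • q.a + F.1 p.x q.x + (g (p.x * q.x) : A), p.x * q.x⟩ : Bf F')
      = (⟨p.a + (g p.x : A), p.x⟩ : Bf F') + (⟨q.a + (g q.x : A), q.x⟩ : Bf F')
    rw [Bf.add_def]
    refine Bf.ext ?_ rfl
    show p.a + p.x • q.a + F.1 p.x q.x + (g (p.x * q.x) : A)
      = p.a + (g p.x : A) + p.x • (q.a + (g q.x : A)) + F'.1 p.x q.x
    rw [add_assoc (p.a + p.x • q.a), hFg, smul_add]
    abel
  · intro a
    show (⟨a + (g 1 : A), (1 : M)⟩ : Bf F') = ⟨a, 1⟩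
    rw [hg1, AddUnits.val_zero, add_zero]
  · exact fun b => rfl
  · intro x u hu
    obtain ⟨hx, ha⟩ := (isRep_extOfCocycle F x u).1 hu
    exact (isRep_extOfCocycle F' x ⟨u.a + (g u.x : A), u.x⟩).2
      ⟨hx, ha.add (g u.x).isAddUnit⟩

theorem zero_congruent :
    SchreierCongruent (extOfCocycle (zeroCocycle M A)) (semidirectExtension M A) := by
  refine ⟨{ toFun := fun p => (⟨p.a, p.x⟩ : SemidirectCarrier M A)
            map_zero' := rfl
            map_add' := ?_ }, ?_, fun b => rfl, ?_⟩
  · intro p q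
    show (⟨p.a + p.x • q.a + 0, p.x * q.x⟩ : SemidirectCarrier M A)
      = SemidirectCarrier.add ⟨p.a, p.x⟩ ⟨q.a, q.x⟩
    unfold SemidirectCarrier.add
    rw [add_zero]
  · intro a; rfl
  · intro x u hu
    obtain ⟨hx, ha⟩ := (isRep_extOfCocycle (zeroCocycle M A) x u).1 hu
    exact (isRep_semidirect x ⟨u.a, u.x⟩).2 ⟨hx, ha⟩

end ZetaAux

/-- Let `M` be a monoid and `A` an `M`-semimodule.  The map
`ζ(M,A) : 𝓗²(M,A) → 𝓔(M,A)` from the set of strong-cohomology classes of `2`-cocycles to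
the set of congruence classes of Schreier extensions of `A` by `M`, sending the class of a
`2`-cocycle `f` to the class of the extension `E_f`, is a well-defined bijection of
pointed sets:  the class of the zero `2`-cocycle corresponds to the class of the
semidirect product extension `0 : A ↣ A ⋊ M ↠ M`. -/
theorem zeta_bijective {M : Type u} {A : Type v}
    [Monoid M] [AddCommMonoid A] [DistribMulAction M A] :
    ∃ ζ : Quot (fun F F' : Cocycle M A => StronglyCohomologous M A F.1 F'.1)
        → Quot (SchreierCongruent (M := M) (A := A)),
      (∀ F : Cocycle M A, ζ (Quot.mk _ F) = Quot.mk _ (extOfCocycle F)) ∧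
      Function.Bijective ζ ∧
      ζ (Quot.mk _ (zeroCocycle M A)) = Quot.mk _ (semidirectExtension M A) := by
  have hwd : ∀ F F' : Cocycle M A, StronglyCohomologous M A F.1 F'.1 →
      (Quot.mk (SchreierCongruent (M := M) (A := A)) (extOfCocycle F))
        = Quot.mk _ (extOfCocycle F') :=
    fun F F' h => Quot.sound (extOf_congruent h)
  have hinv : ∀ E E' : SchreierExtension M A, SchreierCongruent E E' →
      Quot.mk (fun F F' : Cocycle M A => StronglyCohomologous M A F.1 F'.1) E.cocOf
        = Quot.mk _ E'.cocOf :=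
    fun E E' h => Quot.sound (congr_cohomologous h)
  refine ⟨Quot.lift (fun F : Cocycle M A => Quot.mk _ (extOfCocycle F)) hwd,
    fun F => rfl, ?_, Quot.sound zero_congruent⟩
  rw [Function.bijective_iff_has_inverse]
  refine ⟨Quot.lift (fun E : SchreierExtension M A => Quot.mk _ E.cocOf) hinv, ?_, ?_⟩
  · exact Quot.ind fun F => Quot.sound (cocOf_extOfCocycle F)
  · exact Quot.ind fun E => Quot.sound (congr_cocOf E)
end

section
/- Let M be a monoid, A an M-semimodule, and E₁, E₂ Schreier extensions of A by M. Then E₁ is similar to E₂ if and only if the pushforward extensions k_A E₁ and k_A E₂ along the canonical homomorphism k_A: A → K(A) are congruent. -/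
universe u v

section Aux

variable {M : Type u} {A C : Type v}
    [Monoid M] [AddCommMonoid A] [DistribMulAction M A]
    [AddCommGroup C] [DistribMulAction M C]

/-- Key lemma: two pushforwards of the same Schreier extension along the same
homomorphism into a group are congruent. -/
theorem pushforward_congruent' (kA : A →+ C) (E : SchreierExtension M A)
    (F G : SchreierExtension M C) (β : E.B →+ F.B) (γ : E.B →+ G.B)
    (hβ : IsSchreierHom E F kA β) (hγ : IsSchreierHom E G kA γ) :
    SchreierCongruent F G := by
  classical
  obtain ⟨hβκ, hβσ, hβrep⟩ := hβ
  obtain ⟨hγκ, hγσ, hγrep⟩ := hγ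
  choose u hu using E.rep_exists
  have hrepF : ∀ x, F.IsRep x (β (u x)) := fun x => hβrep x (u x) (hu x)
  have hrepG : ∀ x, G.IsRep x (γ (u x)) := fun x => hγrep x (u x) (hu x)
  have hcoeff : ∀ b : F.B, ∃! c : C, b = F.κ c + β (u (F.σ b)) :=
    fun b => (hrepF (F.σ b)).2 b rfl
  set c : F.B → C := fun b => (hcoeff b).choose with hc_def
  have hc : ∀ b, b = F.κ (c b) + β (u (F.σ b)) := fun b => (hcoeff b).choose_spec.1
  have hcu : ∀ (b : F.B) (c' : C), b = F.κ c' + β (u (F.σ b)) → c' = c b :=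
    fun b c' h => (hcoeff b).choose_spec.2 c' h
  -- factor set
  have hfacE : ∀ x y : M, ∃ a : A, u x + u y = E.κ a + u (x * y) := by
    intro x y
    have hσ : E.σ (u x + u y) = x * y := by
      rw [E.sigma_add, (hu x).1, (hu y).1]
    obtain ⟨a, ha, -⟩ := (hu (x * y)).2 (u x + u y) hσ
    exact ⟨a, ha⟩
  choose f hf using hfacE
  have hcompF : ∀ (x : M) (d : C), β (u x) + F.κ d = F.κ (x • d) + β (u x) := by
    intro x d
    have h := F.compat d (β (u x))
    rwa [(hrepF x).1] at h
  have hcompG : ∀ (x : M) (d : C), γ (u x) + G.κ d = G.κ (x • d) + γ (u x) := by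
    intro x d
    have h := G.compat d (γ (u x))
    rwa [(hrepG x).1] at h
  have keyF : ∀ (c₁ c₂ : C) (x y : M),
      (F.κ c₁ + β (u x)) + (F.κ c₂ + β (u y))
        = F.κ (c₁ + x • c₂ + kA (f x y)) + β (u (x * y)) := by
    intro c₁ c₂ x y
    have h2 : β (u x) + β (u y) = F.κ (kA (f x y)) + β (u (x * y)) := by
      rw [← map_add, hf x y, map_add, hβκ]
    calc (F.κ c₁ + β (u x)) + (F.κ c₂ + β (u y))
        = F.κ c₁ + ((β (u x) + F.κ c₂) + β (u y)) := by rw [add_assoc, add_assoc]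
      _ = F.κ c₁ + (F.κ (x • c₂) + (β (u x) + β (u y))) := by rw [hcompF x c₂, add_assoc]
      _ = F.κ c₁ + (F.κ (x • c₂) + (F.κ (kA (f x y)) + β (u (x * y)))) := by rw [h2]
      _ = F.κ (c₁ + x • c₂ + kA (f x y)) + β (u (x * y)) := by
            rw [map_add, map_add, add_assoc, add_assoc]
  have keyG : ∀ (c₁ c₂ : C) (x y : M),
      (G.κ c₁ + γ (u x)) + (G.κ c₂ + γ (u y))
        = G.κ (c₁ + x • c₂ + kA (f x y)) + γ (u (x * y)) := by
    intro c₁ c₂ x y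
    have h2 : γ (u x) + γ (u y) = G.κ (kA (f x y)) + γ (u (x * y)) := by
      rw [← map_add, hf x y, map_add, hγκ]
    calc (G.κ c₁ + γ (u x)) + (G.κ c₂ + γ (u y))
        = G.κ c₁ + ((γ (u x) + G.κ c₂) + γ (u y)) := by rw [add_assoc, add_assoc]
      _ = G.κ c₁ + (G.κ (x • c₂) + (γ (u x) + γ (u y))) := by rw [hcompG x c₂, add_assoc]
      _ = G.κ c₁ + (G.κ (x • c₂) + (G.κ (kA (f x y)) + γ (u (x * y)))) := by rw [h2]
      _ = G.κ (c₁ + x • c₂ + kA (f x y)) + γ (u (x * y)) := by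
            rw [map_add, map_add, add_assoc, add_assoc]
  have hcadd : ∀ b₁ b₂ : F.B,
      c (b₁ + b₂) = c b₁ + F.σ b₁ • c b₂ + kA (f (F.σ b₁) (F.σ b₂)) := by
    intro b₁ b₂
    symm
    apply hcu
    rw [F.sigma_add]
    calc b₁ + b₂ = (F.κ (c b₁) + β (u (F.σ b₁))) + (F.κ (c b₂) + β (u (F.σ b₂))) := by
          rw [← hc b₁, ← hc b₂]
      _ = _ := keyF _ _ _ _
  -- the unit
  obtain ⟨a₁, ha₁⟩ : ∃ a, E.κ a = u 1 := (E.range_eq (u 1)).1 (hu 1).1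
  have hβu1 : β (u 1) = F.κ (kA a₁) := by rw [← ha₁, hβκ]
  have hγu1 : γ (u 1) = G.κ (kA a₁) := by rw [← ha₁, hγκ]
  have hc0 : c 0 + kA a₁ = 0 := by
    apply F.kappa_inj
    rw [map_add, map_zero, ← hβu1]
    have h0 := hc 0
    rw [F.sigma_zero] at h0
    exact h0.symm
  refine ⟨{ toFun := fun b => G.κ (c b) + γ (u (F.σ b)), map_zero' := ?_, map_add' := ?_ },
    ?_, ?_, ?_⟩
  · show G.κ (c 0) + γ (u (F.σ 0)) = 0
    rw [F.sigma_zero, hγu1, ← map_add, hc0, map_zero]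
  · intro b₁ b₂
    show G.κ (c (b₁ + b₂)) + γ (u (F.σ (b₁ + b₂)))
        = (G.κ (c b₁) + γ (u (F.σ b₁))) + (G.κ (c b₂) + γ (u (F.σ b₂)))
    rw [hcadd, F.sigma_add, keyG]
  · intro d
    show G.κ (c (F.κ d)) + γ (u (F.σ (F.κ d))) = G.κ (AddMonoidHom.id C d)
    have hσκ : F.σ (F.κ d) = 1 := (F.range_eq _).2 ⟨d, rfl⟩
    have hcd : c (F.κ d) + kA a₁ = d := by
      apply F.kappa_inj
      rw [map_add, ← hβu1]
      have h0 := hc (F.κ d)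
      rw [hσκ] at h0
      exact h0.symm
    rw [hσκ, hγu1, ← map_add, hcd]
    rfl
  · intro b
    show G.σ (G.κ (c b) + γ (u (F.σ b))) = F.σ b
    rw [G.sigma_add, (G.range_eq _).2 ⟨_, rfl⟩, one_mul, (hrepG (F.σ b)).1]
  · intro x v hv
    have hσv : F.σ v = x := hv.1
    refine ⟨?_, ?_⟩
    · show G.σ (G.κ (c v) + γ (u (F.σ v))) = x
      rw [G.sigma_add, (G.range_eq _).2 ⟨_, rfl⟩, one_mul, (hrepG (F.σ v)).1, hσv]
    · intro b hb
      obtain ⟨d, hd, hduniq⟩ := (hrepG x).2 b hb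
      refine ⟨d - c v, ?_, ?_⟩
      · show b = G.κ (d - c v) + (G.κ (c v) + γ (u (F.σ v)))
        rw [hσv, ← add_assoc, ← map_add, sub_add_cancel]
        exact hd
      · intro e he
        have he' : b = G.κ e + (G.κ (c v) + γ (u (F.σ v))) := he
        have hed : e + c v = d := by
          apply hduniq
          rw [map_add, add_assoc, ← hσv]
          exact he'
        exact eq_sub_of_add_eq hed

end Aux

/-- Let `M` be a monoid, `A` an `M`-semimodule, and `E₁, E₂` Schreier extensions of `A`
by `M`.  Let `k_A : A → K(A)` be the canonical homomorphism into the group completion of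
`A` (an `M`-module `C` together with an equivariant homomorphism `k_A` such that
`k_A a = k_A a' ↔ a + z = a' + z` for some `z`, and every element of `C` is a difference
`k_A a − k_A a'`).  Then `E₁` is similar to `E₂` — i.e. there are a Schreier extension `S`
of the `M`-module `K(A)` by `M` and morphisms `(k_A, γ₁, 1_M) : E₁ → S` and
`(k_A, γ₂, 1_M) : E₂ → S` — if and only if the pushforward extensions `k_A E₁` and
`k_A E₂` (here: any Schreier extensions `F₁, F₂` of `K(A)` by `M` admitting morphisms
`(k_A, β₁, 1_M) : E₁ → F₁` and `(k_A, β₂, 1_M) : E₂ → F₂`) are congruent. -/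
theorem similar_iff_pushforward_congruent {M : Type u} {A C : Type v}
    [Monoid M] [AddCommMonoid A] [DistribMulAction M A]
    [AddCommGroup C] [DistribMulAction M C]
    (kA : A →+ C)
    (hk_eq : ∀ a a' : A, kA a = kA a' ↔ ∃ z : A, a + z = a' + z)
    (hk_sur : ∀ c : C, ∃ a a' : A, c = kA a - kA a')
    (hk_act : ∀ (x : M) (a : A), kA (x • a) = x • kA a)
    (E₁ E₂ : SchreierExtension M A) (F₁ F₂ : SchreierExtension M C)
    (β₁ : E₁.B →+ F₁.B) (β₂ : E₂.B →+ F₂.B)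
    (hβ₁ : IsSchreierHom E₁ F₁ kA β₁) (hβ₂ : IsSchreierHom E₂ F₂ kA β₂) :
    (∃ (S : SchreierExtension M C) (γ₁ : E₁.B →+ S.B) (γ₂ : E₂.B →+ S.B),
        IsSchreierHom E₁ S kA γ₁ ∧ IsSchreierHom E₂ S kA γ₂)
      ↔ SchreierCongruent F₁ F₂ := by
  constructor
  · rintro ⟨S, γ₁, γ₂, h₁, h₂⟩
    obtain ⟨δ₁, hδ₁κ, hδ₁σ, hδ₁rep⟩ := pushforward_congruent' kA E₁ F₁ S β₁ γ₁ hβ₁ h₁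
    obtain ⟨δ₂, hδ₂κ, hδ₂σ, hδ₂rep⟩ := pushforward_congruent' kA E₂ S F₂ γ₂ β₂ h₂ hβ₂
    refine ⟨δ₂.comp δ₁, ?_, ?_, ?_⟩
    · intro cc
      rw [AddMonoidHom.comp_apply, hδ₁κ, hδ₂κ]
      rfl
    · intro b
      rw [AddMonoidHom.comp_apply, hδ₂σ, hδ₁σ]
    · intro x w hw
      exact hδ₂rep x _ (hδ₁rep x w hw)
  · rintro ⟨δ, hδκ, hδσ, hδrep⟩
    refine ⟨F₂, δ.comp β₁, β₂, ⟨?_, ?_, ?_⟩, hβ₂⟩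
    · intro a
      rw [AddMonoidHom.comp_apply, hβ₁.1, hδκ]
      rfl
    · intro b
      rw [AddMonoidHom.comp_apply, hδσ, hβ₁.2.1]
    · intro x w hw
      exact hδrep x _ (hβ₁.2.2 x w hw)
end

section
/- Let S be an additively written Ore monoid with group of left fractions G = −S+S, let A be the centre of S, and let Π be a group. Suppose given, for each x ∈ Π, an automorphism φ(x) of S with φ(1) = id, and, for each pair x,y ∈ Π, an invertible element f(x,y) of S with f(x,1) = 0 = f(1,y) and φ(x)∘φ(y) = μ_{f(x,y)}∘φ(xy). Let φ̃(x) denote the extension of φ(x) to an automorphism of G. If a function k: Π × Π × Π → Z(G) into the centre of G satisfies φ̃(x)(f(y,z)) + f(x,yz) = k(x,y,z) + f(x,y) + f(xy,z) for all x,y,z ∈ Π, then every value k(x,y,z) lies in U(A), i.e., is an invertible element of S belonging to the centre of S. -/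
universe u

/-- The multiplicative group structure on `AddAut A` (multiplication is composition), as in
the older Mathlib, where `AddAut A` carried a `Group` instance. -/
instance AddAut.group (A : Type*) [Add A] : Group (AddAut A) where
  mul g h := AddEquiv.trans h g
  one := AddEquiv.refl _
  inv := AddEquiv.symm
  mul_assoc _ _ _ := rfl
  one_mul _ := rfl
  mul_one _ := rfl
  inv_mul_cancel := AddEquiv.self_trans_symm

section InnerAutomorphisms

variable {N : Type u} [AddMonoid N]

/-- The inner automorphism `μ_u : s ↦ u + s − u` of an additively written (not
necessarily commutative) monoid `N` induced by an invertible element `u` of `N`. -/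
def innerAddAut (u : AddUnits N) : AddAut N where
  toFun s := ↑u + s + ↑(-u)
  invFun s := ↑(-u) + s + ↑u
  left_inv s := by
    simp only [← add_assoc, AddUnits.neg_add, zero_add]
    rw [add_assoc, AddUnits.neg_add, add_zero]
  right_inv s := by
    simp only [← add_assoc, AddUnits.add_neg, zero_add]
    rw [add_assoc, AddUnits.add_neg, add_zero]
  map_add' s t := by
    have : (↑(-u) + (↑u + t)) = t := by
      rw [← add_assoc, AddUnits.neg_add, zero_add]
    simp only [← add_assoc]
    rw [add_assoc (↑u + s) (↑(-u)) (↑u), AddUnits.neg_add, add_zero]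

/-- The group `In(N)` of inner automorphisms of `N`, a subgroup of `Aut(N)`. -/
def innerAddAuts (N : Type u) [AddMonoid N] : Subgroup (AddAut N) where
  carrier := {φ | ∃ u : AddUnits N, φ = innerAddAut u}
  one_mem' := ⟨0, by ext s; simp [innerAddAut]; rfl⟩
  mul_mem' := by
    rintro φ ψ ⟨u, rfl⟩ ⟨v, rfl⟩
    refine ⟨u + v, ?_⟩
    ext s
    show innerAddAut u (innerAddAut v s) = innerAddAut (u + v) s
    simp only [innerAddAut, AddEquiv.coe_mk, Equiv.coe_fn_mk, neg_add_rev,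
      AddUnits.val_add]
    simp only [← add_assoc]
  inv_mem' := by
    rintro φ ⟨u, rfl⟩
    refine ⟨-u, ?_⟩
    ext s
    show (innerAddAut u).symm s = innerAddAut (-u) s
    simp only [innerAddAut, AddEquiv.symm_mk, AddEquiv.coe_mk, Equiv.coe_fn_mk, neg_neg]
    rfl

end InnerAutomorphisms

instance innerAddAuts_normal (N : Type u) [AddMonoid N] : (innerAddAuts N).Normal where
  conj_mem := by
    rintro φ ⟨u, rfl⟩ ψ
    refine ⟨AddUnits.map (ψ : N ≃+ N).toAddMonoidHom u, ?_⟩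
    ext s
    show ψ (innerAddAut u (ψ⁻¹ s)) = innerAddAut (AddUnits.map (ψ : N ≃+ N).toAddMonoidHom u) s
    simp only [innerAddAut, AddEquiv.coe_mk, Equiv.coe_fn_mk, map_add]
    rw [← map_neg (AddUnits.map (AddEquiv.toAddMonoidHom ψ)) u]
    rw [AddUnits.coe_map, AddUnits.coe_map]
    have hs : ψ (ψ⁻¹ s) = s := ψ.apply_symm_apply s
    rw [hs]
    rfl

/-! The identity `φ̃ x (f y z) + f x (y*z) = k x y z + (f x y + f (x*y) z)` expresses `k x y z`
as a difference of images of invertible elements of `S`, so `k x y z` is itself the image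
of an invertible element of `S`; being central in `G`, it commutes in particular with `S`. -/

namespace AddSubmonoid

variable {G : Type*} [AddGroup G] {S : AddSubmonoid G}

theorem coe_addUnits_neg (u : AddUnits S) : ((↑(-u) : S) : G) = -((u : S) : G) :=
  eq_neg_of_add_eq_zero_left <| by
    rw [← coe_add, AddUnits.neg_add, coe_zero]

theorem coe_addUnits_add_neg (v w : AddUnits S) :
    ((↑(v + -w) : S) : G) = ((v : S) : G) - ((w : S) : G) := by
  rw [AddUnits.val_add, coe_add, coe_addUnits_neg, sub_eq_add_neg]

theorem eq_coe_addUnits_of_coe_eq_add {g : G} {v w : AddUnits S}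
    (h : ((v : S) : G) = g + ((w : S) : G)) : g = ((↑(v + -w) : S) : G) := by
  rw [coe_addUnits_add_neg, h, add_sub_cancel_right]

theorem add_comm_of_coe_mem_center {a : S} (ha : (a : G) ∈ AddSubgroup.center G) (s : S) :
    a + s = s + a :=
  Subtype.ext <| by
    simpa only [coe_add] using AddSubgroup.mem_center_iff.mp ha (s : G) |>.symm

end AddSubmonoid

theorem obstruction_cocycle_mem_units_center_general {G : Type u} [AddGroup G] (S : AddSubmonoid G)
    {P : Type*} [Group P]
    (φ : P → AddAut S)
    (f : P → P → AddUnits S)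
    (φt : P → AddAut G)
    (hext : ∀ (x : P) (s : S), φt x (s : G) = ((φ x s : S) : G))
    (k : P → P → P → G)
    (hkc : ∀ x y z : P, k x y z ∈ AddSubgroup.center G)
    (hk : ∀ x y z : P,
      φt x (((f y z : S) : G)) + ((f x (y * z) : S) : G)
        = k x y z + ((f x y : S) : G) + ((f (x * y) z : S) : G)) :
    ∀ x y z : P, ∃ a : S,
      IsAddUnit a ∧ (∀ s : S, a + s = s + a) ∧ (a : G) = k x y z := by
  intro x y z
  set v : AddUnits S := AddUnits.map (φ x : S ≃+ S).toAddMonoidHom (f y z) + f x (y * z)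
  set w : AddUnits S := f x y + f (x * y) z
  have hkvw : k x y z = ((↑(v + -w) : S) : G) := by
    refine AddSubmonoid.eq_coe_addUnits_of_coe_eq_add ?_
    simp only [v, w, AddUnits.val_add, AddSubmonoid.coe_add, AddUnits.coe_map,
      ← add_assoc]
    exact (hext x _).symm ▸ hk x y z
  exact ⟨_, ⟨v + -w, rfl⟩, AddSubmonoid.add_comm_of_coe_mem_center
    (hkvw ▸ hkc x y z), hkvw.symm⟩

/-- Let `S` be an additively written Ore monoid with group of left fractions `G = −S + S`
(formalized as: `S` is a submonoid of a group `G` every element of which has the form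
`−s₁ + s₂` with `s₁, s₂ ∈ S`), and let `Π` be a group.  Suppose given, for each `x ∈ Π`,
an automorphism `φ x` of `S` with `φ 1 = id`, and, for each pair `x, y`, an invertible
element `f x y` of `S` with `f x 1 = 0 = f 1 y` and `φ x ∘ φ y = μ_{f x y} ∘ φ (x*y)`.
Let `φ̃ x` denote the extension of `φ x` to an automorphism of `G` (an automorphism of
`G` restricting to `φ x` on `S`).  If a function `k : Π × Π × Π → Z(G)` into the centre
of `G` satisfies `φ̃ x (f y z) + f x (y*z) = k x y z + f x y + f (x*y) z` for all
`x, y, z ∈ Π`, then every value `k x y z` lies in `U(A)`:  it is (the image in `G` of) an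
invertible element of `S` belonging to the centre `A` of `S`. -/
theorem obstruction_cocycle_mem_units_center {G : Type u} [AddGroup G] (S : AddSubmonoid G)
    (hfrac : ∀ g : G, ∃ s₁ s₂ : S, g = -(s₁ : G) + (s₂ : G))
    {P : Type*} [Group P]
    (φ : P → AddAut S) (hφ1 : φ 1 = 1)
    (f : P → P → AddUnits S)
    (hfr : ∀ x : P, f x 1 = 0) (hfl : ∀ y : P, f 1 y = 0)
    (hcomp : ∀ x y : P, φ x * φ y = innerAddAut (f x y) * φ (x * y))
    (φt : P → AddAut G)
    (hext : ∀ (x : P) (s : S), φt x (s : G) = ((φ x s : S) : G))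
    (k : P → P → P → G)
    (hkc : ∀ x y z : P, k x y z ∈ AddSubgroup.center G)
    (hk : ∀ x y z : P,
      φt x (((f y z : S) : G)) + ((f x (y * z) : S) : G)
        = k x y z + ((f x y : S) : G) + ((f (x * y) z : S) : G)) :
    ∀ x y z : P, ∃ a : S,
      IsAddUnit a ∧ (∀ s : S, a + s = s + a) ∧ (a : G) = k x y z :=
  obstruction_cocycle_mem_units_center_general S φ f φt hext k hkc hk
end
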